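/- arXiv:0811.1378 — 6 statements merged into one kernel-verified Lean document; each statement's English description precedes it below -/
import Mathlib

section
/- Let t be a real number with 0 < t < 1 and let j ≥ 1 be an integer with 1/(j+1) < t ≤ 1/j. Then there exists a sequence (j_i)_{i≥1} of integers with j_i ∈ {j, j+1} for every i such that for all integers m ≥ 1 one has (j/(j+1))·∏_{i=1}^{m} j_i^{-1} ≤ t^m ≤ ((j+1)/j)·∏_{i=1}^{m} j_i^{-1}. -/
open Classical in
noncomputable def laaksoQ (t : ℝ) (j : ℕ) : ℕ → ℝ
  | 0 => 1
  | m + 1 => laaksoQ t j m * t *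
      (if laaksoQ t j m ≤ 1 then (j : ℝ) + 1 else (j : ℝ))

/-- for `0 < t < 1` and an integer `j ≥ 1` with `1/(j+1) < t ≤ 1/j`,
there is a sequence `(j_i)` with `j_i ∈ {j, j+1}` (here `js i` encodes `j_{i+1}`)
such that `(j/(j+1))·∏_{i=1}^m j_i⁻¹ ≤ t^m ≤ ((j+1)/j)·∏_{i=1}^m j_i⁻¹` for all `m ≥ 1`. -/
theorem stmt0 (t : ℝ) (j : ℕ) (hj : 1 ≤ j) (ht0 : 0 < t) (ht1 : t < 1)
    (hlow : 1 / ((j : ℝ) + 1) < t) (thigh : t ≤ 1 / (j : ℝ)) :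
    ∃ js : ℕ → ℕ, (∀ i, js i = j ∨ js i = j + 1) ∧
      ∀ m : ℕ, 1 ≤ m →
        ((j : ℝ) / ((j : ℝ) + 1)) * ∏ i ∈ Finset.range m, ((js i : ℝ))⁻¹ ≤ t ^ m ∧
          t ^ m ≤ (((j : ℝ) + 1) / (j : ℝ)) * ∏ i ∈ Finset.range m, ((js i : ℝ))⁻¹ := by
  classical
  have hjR : (1 : ℝ) ≤ (j : ℝ) := by exact_mod_cast hj
  have hj0 : (0 : ℝ) < (j : ℝ) := by linarith
  have hj1 : (0 : ℝ) < (j : ℝ) + 1 := by linarith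
  set js : ℕ → ℕ := fun i => if laaksoQ t j i ≤ 1 then j + 1 else j with hjs
  have hjsval : ∀ i, js i = j ∨ js i = j + 1 := by
    intro i; simp only [hjs]; split <;> simp
  have hjspos : ∀ i, (0 : ℝ) < (js i : ℝ) := by
    intro i
    rcases hjsval i with h | h <;> rw [h] <;> push_cast <;> linarith
  -- key facts about t
  have htj : t * (j : ℝ) ≤ 1 := by
    rw [le_div_iff₀ hj0] at thigh; linarith [thigh]
  have htj' : (j : ℝ) / ((j : ℝ) + 1) < t * (j : ℝ) := by
    have : (1 : ℝ) / ((j : ℝ) + 1) < t := hlow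
    rw [div_lt_iff₀ hj1] at this ⊢
    nlinarith
  have htj1 : 1 < t * ((j : ℝ) + 1) := by
    rw [div_lt_iff₀ hj1] at hlow; linarith
  have htj1' : t * ((j : ℝ) + 1) ≤ ((j : ℝ) + 1) / (j : ℝ) := by
    rw [le_div_iff₀ hj0]
    rw [le_div_iff₀ hj0] at thigh
    nlinarith
  -- Q m = t^m * ∏ js i
  have hQ : ∀ m, laaksoQ t j m = t ^ m * ∏ i ∈ Finset.range m, (js i : ℝ) := by
    intro m
    induction m with
    | zero => simp [laaksoQ]
    | succ n ih =>
      by_cases h : laaksoQ t j n ≤ 1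
      · have hstep : laaksoQ t j (n + 1) = laaksoQ t j n * t * ((j : ℝ) + 1) := by
          show laaksoQ t j n * t * _ = _
          rw [if_pos h]
        have hjsn : (js n : ℝ) = (j : ℝ) + 1 := by
          simp only [hjs, if_pos h]; push_cast; ring
        rw [Finset.prod_range_succ, pow_succ, hstep, ih, hjsn]; ring
      · have hstep : laaksoQ t j (n + 1) = laaksoQ t j n * t * (j : ℝ) := by
          show laaksoQ t j n * t * _ = _
          rw [if_neg h]
        have hjsn : (js n : ℝ) = (j : ℝ) := by
          simp only [hjs, if_neg h]
        rw [Finset.prod_range_succ, pow_succ, hstep, ih, hjsn]; ring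
  -- invariant
  have hinv : ∀ m, (j : ℝ) / ((j : ℝ) + 1) ≤ laaksoQ t j m ∧
      laaksoQ t j m ≤ ((j : ℝ) + 1) / (j : ℝ) := by
    intro m
    induction m with
    | zero =>
      constructor
      · simp [laaksoQ]; rw [div_le_iff₀ hj1]; linarith
      · simp [laaksoQ]; rw [le_div_iff₀ hj0]; linarith
    | succ n ih =>
      obtain ⟨h1, h2⟩ := ih
      have hQpos : 0 < laaksoQ t j n := lt_of_lt_of_le (div_pos hj0 hj1) h1
      show _ ≤ laaksoQ t j n * t * _ ∧ laaksoQ t j n * t * _ ≤ _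
      split
      · rename_i hle
        constructor
        · calc (j : ℝ) / ((j : ℝ) + 1) ≤ laaksoQ t j n := h1
            _ ≤ laaksoQ t j n * (t * ((j : ℝ) + 1)) := by
                nlinarith
            _ = laaksoQ t j n * t * ((j : ℝ) + 1) := by ring
        · calc laaksoQ t j n * t * ((j : ℝ) + 1)
              = laaksoQ t j n * (t * ((j : ℝ) + 1)) := by ring
            _ ≤ 1 * (((j : ℝ) + 1) / (j : ℝ)) := by
                apply mul_le_mul hle htj1' (by linarith) (by norm_num)
            _ = ((j : ℝ) + 1) / (j : ℝ) := by ring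
      · rename_i hgt
        push_neg at hgt
        constructor
        · calc (j : ℝ) / ((j : ℝ) + 1) = 1 * ((j : ℝ) / ((j : ℝ) + 1)) := (one_mul _).symm
            _ ≤ laaksoQ t j n * (t * (j : ℝ)) := by
                apply mul_le_mul (le_of_lt hgt) (le_of_lt htj') (le_of_lt (div_pos hj0 hj1)) (by linarith)
            _ = laaksoQ t j n * t * (j : ℝ) := by ring
        · calc laaksoQ t j n * t * (j : ℝ)
              = laaksoQ t j n * (t * (j : ℝ)) := by ring
            _ ≤ laaksoQ t j n := by nlinarith
            _ ≤ ((j : ℝ) + 1) / (j : ℝ) := h2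
  refine ⟨js, hjsval, ?_⟩
  intro m _
  have hprodpos : 0 < ∏ i ∈ Finset.range m, (js i : ℝ) :=
    Finset.prod_pos fun i _ => hjspos i
  have hprodinv : ∏ i ∈ Finset.range m, ((js i : ℝ))⁻¹ =
      (∏ i ∈ Finset.range m, (js i : ℝ))⁻¹ := by
    rw [Finset.prod_inv_distrib]
  have htm : t ^ m = laaksoQ t j m * (∏ i ∈ Finset.range m, (js i : ℝ))⁻¹ := by
    rw [hQ m, mul_assoc, mul_inv_cancel₀ (ne_of_gt hprodpos), mul_one]
  obtain ⟨h1, h2⟩ := hinv m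
  rw [hprodinv, htm]
  constructor
  · exact mul_le_mul_of_nonneg_right h1 (le_of_lt (inv_pos.mpr hprodpos))
  · exact mul_le_mul_of_nonneg_right h2 (le_of_lt (inv_pos.mpr hprodpos))
end

section
/- The family of maps (Φ̃_n)_{n≥0} separates the points of the Laakso space L: for any two distinct points p, q ∈ L there exists n ≥ 0 with Φ̃_n(p) ≠ Φ̃_n(q). -/
open MeasureTheory Set Filter

/-- The value `w(m_1, …, m_l)` of a tuple, encoded as a list `[m_1, …, m_l]`
(so list index `i` corresponds to `m_{i+1}`, and `J i` to `j_{i+1}`):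
`w = Σ_{i=1}^{l} m_i ∏_{h=1}^{i} j_h⁻¹`. -/
noncomputable def wLoc (J : ℕ → ℕ) (m : List ℕ) : ℝ :=
  ∑ i ∈ Finset.range m.length,
    (m.getD i 0 : ℝ) * ∏ h ∈ Finset.range (i + 1), ((J h : ℝ))⁻¹

/-- A tuple `(m_1, …, m_l)` (encoded as a list) is admissible if `l ≥ 1`,
`0 ≤ m_i < j_i` for all `1 ≤ i ≤ l` and `0 < m_l`. -/
def Admissible (J : ℕ → ℕ) (m : List ℕ) : Prop :=
  m ≠ [] ∧ (∀ i, i < m.length → m.getD i 0 < J i) ∧ 0 < m.getD (m.length - 1) 0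

/-- `x` is a wormhole location of level `l`. -/
def IsWormhole (J : ℕ → ℕ) (l : ℕ) (x : ℝ) : Prop :=
  ∃ m : List ℕ, m.length = l ∧ Admissible J m ∧ x = wLoc J m

/-- The unit interval `[0,1]`. -/
abbrev I01 : Type := Set.Icc (0 : ℝ) 1

/-- The Cantor space `K = {0,1}^{ℕ≥1}`; coordinate `i : ℕ` encodes `w_{i+1}`. -/
abbrev Kspace : Type := ℕ → Bool

/-- The relation `R` on `[0,1] × K`: `(x,w) R (x',w')` iff `x = x'`, `x` is a wormhole
location of some level `l ≥ 1`, and `w, w'` differ in coordinate `l` and agree in all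
other coordinates (coordinate `l` of the sequence is encoded as index `l - 1`). -/
def laaksoRel (J : ℕ → ℕ) (p q : I01 × Kspace) : Prop :=
  p.1 = q.1 ∧ ∃ l : ℕ, IsWormhole J (l + 1) (p.1 : ℝ) ∧
    p.2 l ≠ q.2 l ∧ ∀ i, i ≠ l → p.2 i = q.2 i

/-- The Laakso space: the quotient of `[0,1] × K` by the equivalence relation
generated by `laaksoRel`. -/
def Laakso (J : ℕ → ℕ) : Type := Quot (laaksoRel J)

instance (J : ℕ → ℕ) : TopologicalSpace (Laakso J) :=
  inferInstanceAs (TopologicalSpace (Quot (laaksoRel J)))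

/-- The relation defining the approximating quantum graph `F_n` on `[0,1] × {0,1}^n`. -/
def graphRel (J : ℕ → ℕ) (n : ℕ) (p q : I01 × (Fin n → Bool)) : Prop :=
  p.1 = q.1 ∧ ∃ l : Fin n, IsWormhole J (l.1 + 1) (p.1 : ℝ) ∧
    p.2 l ≠ q.2 l ∧ ∀ i, i ≠ l → p.2 i = q.2 i

/-- The approximating quantum graph `F_n`. -/
def FGraph (J : ℕ → ℕ) (n : ℕ) : Type := Quot (graphRel J n)

instance (J : ℕ → ℕ) (n : ℕ) : TopologicalSpace (FGraph J n) :=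
  inferInstanceAs (TopologicalSpace (Quot (graphRel J n)))

/-- The projection `[0,1] × {0,1}^{n+1} → [0,1] × {0,1}^n` forgetting the last coordinate. -/
def projMap (n : ℕ) : I01 × (Fin (n + 1) → Bool) → I01 × (Fin n → Bool) :=
  fun p => (p.1, fun i => p.2 i.castSucc)

/-- The truncation `[0,1] × K → [0,1] × {0,1}^n`, `(x,w) ↦ (x, w_1, …, w_n)`. -/
def truncMap (n : ℕ) : I01 × Kspace → I01 × (Fin n → Bool) :=
  fun p => (p.1, fun i => p.2 i)

/-- Lebesgue measure on `[0,1]`. -/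
noncomputable def lebI : Measure I01 := Measure.comap Subtype.val volume


lemma wLoc_cons (J : ℕ → ℕ) (a : ℕ) (m : List ℕ) :
    wLoc J (a :: m) = ((J 0 : ℝ))⁻¹ * ((a : ℝ) + wLoc (fun i => J (i + 1)) m) := by
  unfold wLoc
  rw [List.length_cons, Finset.sum_range_succ']
  simp only [List.getD_cons_succ, List.getD_cons_zero]
  rw [mul_add, add_comm]
  congr 1
  · simp [Finset.prod_range_one, mul_comm]
  · rw [Finset.mul_sum]
    refine Finset.sum_congr rfl fun i _ => ?_
    rw [Finset.prod_range_succ']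
    ring

lemma wLoc_nonneg (J : ℕ → ℕ) (m : List ℕ) : 0 ≤ wLoc J m :=
  Finset.sum_nonneg fun i _ => mul_nonneg (Nat.cast_nonneg _)
    (Finset.prod_nonneg fun h _ => inv_nonneg.2 (Nat.cast_nonneg _))

lemma wLoc_lt_one (J : ℕ → ℕ) (m : List ℕ) (hJ : ∀ i, 1 ≤ J i)
    (hm : ∀ i, i < m.length → m.getD i 0 < J i) : wLoc J m < 1 := by
  induction m generalizing J with
  | nil => simp [wLoc]
  | cons a r ih =>
    rw [wLoc_cons]
    have hJ0 : (0:ℝ) < (J 0 : ℝ) := by exact_mod_cast hJ 0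
    have hw0 : 0 ≤ wLoc (fun i => J (i + 1)) r := wLoc_nonneg _ _
    have hw' : wLoc (fun i => J (i + 1)) r < 1 := by
      refine ih (fun i => J (i + 1)) (fun i => hJ _) (fun i hi => ?_)
      have := hm (i + 1) (by simp [List.length_cons]; omega)
      simpa using this
    have ha : a < J 0 := by simpa using hm 0 (by simp)
    have ha' : (a : ℝ) + 1 ≤ (J 0 : ℝ) := by exact_mod_cast ha
    calc ((J 0 : ℝ))⁻¹ * ((a : ℝ) + wLoc (fun i => J (i + 1)) r)
        < ((J 0 : ℝ))⁻¹ * (J 0 : ℝ) := by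
          apply mul_lt_mul_of_pos_left _ (inv_pos.2 hJ0)
          linarith
      _ = 1 := inv_mul_cancel₀ (ne_of_gt hJ0)

lemma admissible_tail (J : ℕ → ℕ) (a : ℕ) (r : List ℕ) (hr : r ≠ [])
    (h : Admissible J (a :: r)) : Admissible (fun i => J (i + 1)) r := by
  obtain ⟨-, h2, h3⟩ := h
  refine ⟨hr, fun i hi => ?_, ?_⟩
  · have := h2 (i + 1) (by simp [List.length_cons]; omega)
    simpa using this
  · have hlen : (a :: r).length - 1 = (r.length - 1) + 1 := by
      have : r.length ≠ 0 := fun h0 => hr (List.length_eq_zero_iff.mp h0)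
      simp [List.length_cons]; omega
    rw [hlen] at h3
    simpa using h3

lemma wLoc_pos (J : ℕ → ℕ) (m : List ℕ) (hJ : ∀ i, 1 ≤ J i)
    (hm : Admissible J m) : 0 < wLoc J m := by
  induction m generalizing J with
  | nil => exact absurd rfl hm.1
  | cons a r ih =>
    rw [wLoc_cons]
    have hJ0 : (0:ℝ) < (J 0 : ℝ) := by exact_mod_cast hJ 0
    apply mul_pos (inv_pos.2 hJ0)
    rcases List.eq_nil_or_concat r with hr | hr
    · subst hr
      have ha : 0 < a := by simpa using hm.2.2
      have : (0:ℝ) < (a:ℝ) := by exact_mod_cast ha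
      simpa [wLoc] using this
    · have hr' : r ≠ [] := by rcases hr with ⟨L, c, rfl⟩; simp
      have := ih (fun i => J (i + 1)) (fun i => hJ _) (admissible_tail J a r hr' hm)
      have ha : (0:ℝ) ≤ (a:ℝ) := Nat.cast_nonneg _
      linarith

lemma wLoc_inj (J : ℕ → ℕ) (m m' : List ℕ) (hJ : ∀ i, 1 ≤ J i)
    (hm : Admissible J m) (hm' : Admissible J m')
    (h : wLoc J m = wLoc J m') : m = m' := by
  induction m generalizing m' J with
  | nil => exact absurd rfl hm.1
  | cons a r ih =>
    cases m' with
    | nil => exact absurd rfl hm'.1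
    | cons a' r' =>
      rw [wLoc_cons, wLoc_cons] at h
      have hJ0 : (0:ℝ) < (J 0 : ℝ) := by exact_mod_cast hJ 0
      have h' : (a:ℝ) + wLoc (fun i => J (i+1)) r
          = (a':ℝ) + wLoc (fun i => J (i+1)) r' :=
        mul_left_cancel₀ (inv_ne_zero (ne_of_gt hJ0)) h
      have hdig : ∀ (b : ℕ) (s : List ℕ), Admissible J (b :: s) →
          ∀ i, i < s.length → s.getD i 0 < J (i + 1) := by
        intro b s hs i hi
        have := hs.2.1 (i + 1) (by simp [List.length_cons]; omega)
        simpa using this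
      have hw1 : 0 ≤ wLoc (fun i => J (i+1)) r := wLoc_nonneg _ _
      have hw2 : 0 ≤ wLoc (fun i => J (i+1)) r' := wLoc_nonneg _ _
      have hw1' : wLoc (fun i => J (i+1)) r < 1 :=
        wLoc_lt_one _ _ (fun i => hJ _) (hdig a r hm)
      have hw2' : wLoc (fun i => J (i+1)) r' < 1 :=
        wLoc_lt_one _ _ (fun i => hJ _) (hdig a' r' hm')
      have haa : a = a' := by
        have h1 : (a:ℝ) < (a':ℝ) + 1 := by linarith
        have h2 : (a':ℝ) < (a:ℝ) + 1 := by linarith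
        have h1' : a < a' + 1 := by exact_mod_cast h1
        have h2' : a' < a + 1 := by exact_mod_cast h2
        omega
      subst haa
      have hww : wLoc (fun i => J (i+1)) r = wLoc (fun i => J (i+1)) r' := by
        linarith
      cases r with
      | nil =>
        cases r' with
        | nil => rfl
        | cons b s =>
          exfalso
          have hp : 0 < wLoc (fun i => J (i+1)) (b :: s) :=
            wLoc_pos _ _ (fun i => hJ _)
              (admissible_tail J a (b :: s) (by simp) hm')
          rw [← hww] at hp
          simp [wLoc] at hp
      | cons b s =>
        cases r' with
        | nil =>
          exfalso
          have hp : 0 < wLoc (fun i => J (i+1)) (b :: s) :=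
            wLoc_pos _ _ (fun i => hJ _)
              (admissible_tail J a (b :: s) (by simp) hm)
          rw [hww] at hp
          simp [wLoc] at hp
        | cons b' s' =>
          have := ih (fun i => J (i+1)) (b' :: s') (fun i => hJ _)
            (admissible_tail J a (b :: s) (by simp) hm)
            (admissible_tail J a (b' :: s') (by simp) hm') hww
          rw [this]

lemma wormhole_level_unique (J : ℕ → ℕ) (hJ : ∀ i, 1 ≤ J i) (l l' : ℕ) (x : ℝ)
    (h : IsWormhole J l x) (h' : IsWormhole J l' x) : l = l' := by
  obtain ⟨m, hm1, hm2, hm3⟩ := h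
  obtain ⟨m', hm1', hm2', hm3'⟩ := h'
  have heq : m = m' := wLoc_inj J m m' hJ hm2 hm2' (by rw [← hm3, ← hm3'])
  rw [← hm1, ← hm1', heq]

lemma graph_inv (J : ℕ → ℕ) (n : ℕ) (a b : I01 × (Fin n → Bool))
    (h : Relation.EqvGen (graphRel J n) a b) :
    a.1 = b.1 ∧ ∀ i : Fin n, a.2 i ≠ b.2 i → IsWormhole J (i.1 + 1) (a.1 : ℝ) := by
  induction h with
  | rel x y hxy =>
    obtain ⟨h1, l, hl, hne, hagree⟩ := hxy
    refine ⟨h1, fun i hi => ?_⟩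
    by_cases hil : i = l
    · subst hil; exact hl
    · exact absurd (hagree i hil) hi
  | refl x => exact ⟨rfl, fun i hi => absurd rfl hi⟩
  | symm x y _ ih =>
    refine ⟨ih.1.symm, fun i hi => ?_⟩
    have := ih.2 i (Ne.symm hi)
    rwa [ih.1] at this
  | trans x y z _ _ ihxy ihyz =>
    refine ⟨ihxy.1.trans ihyz.1, fun i hi => ?_⟩
    by_cases h : x.2 i = y.2 i
    · have hne : y.2 i ≠ z.2 i := by rw [← h]; exact hi
      have := ihyz.2 i hne
      rwa [← ihxy.1] at this
    · exact ihxy.2 i h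

/-- the family of maps `(Φ̃_n)_{n≥0}` (characterized by
`Φ̃_n ∘ ι = mk_n ∘ trunc_n`) separates the points of the Laakso space `L`. -/
theorem stmt4 (t : ℝ) (j : ℕ) (J : ℕ → ℕ)
    (ht : t ∈ Set.Ioo (0 : ℝ) (1 / 2)) (hj : 2 ≤ j)
    (hjt : 1 / ((j : ℝ) + 1) < t ∧ t ≤ 1 / (j : ℝ))
    (hJ : ∀ i, J i = j ∨ J i = j + 1)
    (Φ : ∀ n : ℕ, Laakso J → FGraph J n)
    (hΦ : ∀ (n : ℕ) (p : I01 × Kspace),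
      Φ n (Quot.mk (laaksoRel J) p) = Quot.mk (graphRel J n) (truncMap n p)) :
    ∀ x y : Laakso J, x ≠ y → ∃ n : ℕ, Φ n x ≠ Φ n y := by
  intro x y hxy
  by_contra hc
  push_neg at hc
  apply hxy
  obtain ⟨p, rfl⟩ := Quot.exists_rep x
  obtain ⟨q, rfl⟩ := Quot.exists_rep y
  have key : ∀ n, Relation.EqvGen (graphRel J n) (truncMap n p) (truncMap n q) := by
    intro n
    have h := hc n
    rw [hΦ, hΦ] at h
    exact Quot.eq.1 h
  have hJ1 : ∀ i, 1 ≤ J i := fun i => by rcases hJ i with h | h <;> omega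
  have h1 : p.1 = q.1 := (graph_inv J 0 _ _ (key 0)).1
  have hworm : ∀ i : ℕ, p.2 i ≠ q.2 i → IsWormhole J (i + 1) (p.1 : ℝ) := by
    intro i hi
    exact (graph_inv J (i + 1) _ _ (key (i + 1))).2 ⟨i, Nat.lt_succ_self i⟩ hi
  by_cases hpq : p.2 = q.2
  · have : p = q := Prod.ext h1 hpq
    rw [this]
  · have hex : ∃ l, p.2 l ≠ q.2 l := by
      by_contra h
      push_neg at h
      exact hpq (funext h)
    obtain ⟨l, hl⟩ := hex
    apply Quot.sound
    refine ⟨h1, l, hworm l hl, hl, fun i hi => ?_⟩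
    by_contra hne
    exact hi (Nat.succ_injective
      (wormhole_level_unique J hJ1 (i + 1) (l + 1) (p.1 : ℝ) (hworm i hne) (hworm l hl)))
end

section
/- The map η : L → lim← F_n defined by η(p) = (Φ̃_n(p))_{n≥0} takes values in the inverse limit lim← F_n and is a homeomorphism of the Laakso space L onto lim← F_n. In particular, L is a compact Hausdorff space. -/
open MeasureTheory Set Filter

/-!
Each wormhole location `x` has a unique level: if `x = w(m_1, …, m_l)` with `m` admissible, then
`x · ∏_{h ≤ l} j_h` is an integer not divisible by `j_l`, whereas `x · ∏_{h ≤ l'} j_h` for `l' > l`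
is that integer times `j_{l+1} ⋯ j_{l'}`, hence divisible by `j_{l'}`. Consequently two points of
`[0,1] × {0,1}^n` (or of `[0,1] × K`) are identified exactly when they have the same `x` and
differ only in coordinates that are levels of `x`; there are finitely many wormholes of each
level, so this is a closed relation and each `F_n` is Hausdorff. The same description holds in `L`,
and a difference in coordinate `l` is already seen in `F_{l+1}`; so `η` is injective. It is
surjective because a compatible sequence is realised by taking the `l`-th coordinate from a
representative at stage `l + 1`. A continuous bijection from the compact space `L` onto the
Hausdorff space `lim← F_n` is a homeomorphism.
-/

open Function

def wNum (J : ℕ → ℕ) (m : List ℕ) : ℕ :=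
  ∑ i ∈ Finset.range m.length, m.getD i 0 * ∏ h ∈ Finset.Ico (i + 1) m.length, J h

lemma wLoc_mul_prod {J : ℕ → ℕ} {m : List ℕ} (hJ : ∀ i < m.length, J i ≠ 0) :
    wLoc J m * ∏ h ∈ Finset.range m.length, (J h : ℝ) = wNum J m := by
  unfold wLoc wNum
  push_cast
  rw [Finset.sum_mul]
  refine Finset.sum_congr rfl fun i hi => ?_
  rw [Finset.mem_range] at hi
  rw [← Finset.prod_range_mul_prod_Ico _ (Nat.succ_le_of_lt hi), Finset.prod_inv_distrib]
  have hne : ∏ h ∈ Finset.range (i + 1), (J h : ℝ) ≠ 0 :=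
    Finset.prod_ne_zero_iff.2 fun h hh => Nat.cast_ne_zero.2
      (hJ h (by rw [Finset.mem_range] at hh; omega))
  field_simp

lemma Admissible.J_ne_zero {J : ℕ → ℕ} {m : List ℕ} (hm : Admissible J m) :
    ∀ i < m.length, J i ≠ 0 :=
  fun i hi => Nat.ne_zero_of_lt (hm.2.1 i hi)

lemma Admissible.not_dvd_wNum {J : ℕ → ℕ} {m : List ℕ} (hm : Admissible J m) :
    ¬ J (m.length - 1) ∣ wNum J m := by
  obtain ⟨hne, hlt, hpos⟩ := hm
  obtain ⟨k, hk⟩ : ∃ k, m.length = k + 1 :=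
    Nat.exists_eq_add_one_of_ne_zero (List.length_pos_iff.2 hne).ne'
  rw [hk, Nat.add_sub_cancel] at hpos ⊢
  have hsplit : wNum J m =
      (∑ i ∈ Finset.range k, m.getD i 0 * ∏ h ∈ Finset.Ico (i + 1) (k + 1), J h) + m.getD k 0 := by
    simp [wNum, hk, Finset.sum_range_succ]
  have hdvd_sum : J k ∣ ∑ i ∈ Finset.range k, m.getD i 0 * ∏ h ∈ Finset.Ico (i + 1) (k + 1), J h :=
    Finset.dvd_sum fun i hi => Dvd.dvd.mul_left (Finset.dvd_prod_of_mem J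
      (by simp only [Finset.mem_range] at hi; simp only [Finset.mem_Ico]; omega)) _
  rw [hsplit, Nat.dvd_add_right hdvd_sum]
  exact Nat.not_dvd_of_pos_of_lt hpos (hlt k (by omega))

lemma IsWormhole.level_eq {J : ℕ → ℕ} {l l' : ℕ} {x : ℝ}
    (h : IsWormhole J l x) (h' : IsWormhole J l' x) : l = l' := by
  wlog hle : l ≤ l' generalizing l l'
  · exact (this h' h (le_of_not_ge hle)).symm
  refine hle.eq_or_lt.resolve_right fun hlt => ?_
  obtain ⟨m, rfl, hm, rfl⟩ := h
  obtain ⟨m', rfl, hm', hx⟩ := h'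
  have hnum : wNum J m * ∏ h ∈ Finset.Ico m.length m'.length, J h = wNum J m' := by
    apply Nat.cast_injective (R := ℝ)
    push_cast
    rw [← wLoc_mul_prod hm.J_ne_zero, ← wLoc_mul_prod hm'.J_ne_zero, ← hx, mul_assoc,
      Finset.prod_range_mul_prod_Ico _ hle]
  refine hm'.not_dvd_wNum (hnum ▸ Dvd.dvd.mul_left (Finset.dvd_prod_of_mem J ?_) _)
  simp only [Finset.mem_Ico]
  omega

lemma finite_setOf_isWormhole (J : ℕ → ℕ) (l : ℕ) : {x : ℝ | IsWormhole J l x}.Finite := by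
  refine ((Set.Finite.pi fun i : Fin l => finite_Iio (J i)).image fun f : Fin l → ℕ =>
    ∑ i : Fin l, (f i : ℝ) * ∏ h ∈ Finset.range (i + 1), ((J h : ℝ))⁻¹).subset ?_
  rintro x ⟨m, rfl, ⟨-, hlt, -⟩, rfl⟩
  exact ⟨fun i => m.getD i 0, fun i _ => hlt i i.2,
    (Finset.sum_range fun i => (m.getD i 0 : ℝ) * ∏ h ∈ Finset.range (i + 1), ((J h : ℝ))⁻¹).symm⟩

theorem t2Space_quot_of_isClosed {X : Type*} [TopologicalSpace X] [CompactSpace X] [T2Space X]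
    {r : X → X → Prop} (hr : IsClosed {z : X × X | Quot.mk r z.1 = Quot.mk r z.2}) :
    T2Space (Quot r) := by
  have hclosedMap : IsClosedMap (Quot.mk r) := by
    intro C hC
    rw [← isQuotientMap_quot_mk.isClosed_preimage]
    have hsat : Quot.mk r ⁻¹' (Quot.mk r '' C) =
        Prod.fst '' ({z : X × X | Quot.mk r z.1 = Quot.mk r z.2} ∩ Prod.snd ⁻¹' C) := by
      ext x
      constructor
      · rintro ⟨y, hy, hxy⟩
        exact ⟨(x, y), ⟨hxy.symm, hy⟩, rfl⟩
      · rintro ⟨⟨x, y⟩, ⟨hxy, hy⟩, rfl⟩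
        exact ⟨y, hy, hxy.symm⟩
    rw [hsat]
    exact isClosedMap_fst_of_compactSpace _ (hr.inter (hC.preimage continuous_snd))
  have hproper : IsProperMap (Quot.mk r) := by
    refine isProperMap_iff_isClosedMap_and_compact_fibers.2
      ⟨continuous_quot_mk, hclosedMap, fun y => ?_⟩
    obtain ⟨x, rfl⟩ := Quot.exists_rep y
    convert (hr.preimage (Continuous.prodMk_right x)).isCompact using 1
    ext y
    exact eq_comm
  rw [t2_iff_isClosed_diagonal]
  convert (hproper.prodMap hproper).isClosedMap _ hr
  ext ⟨u, v⟩
  obtain ⟨x, rfl⟩ := Quot.exists_rep u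
  obtain ⟨y, rfl⟩ := Quot.exists_rep v
  exact ⟨fun h => ⟨(x, y), h, rfl⟩, fun ⟨_, h, he⟩ =>
    (Prod.mk.inj he).1.symm.trans (h.trans (Prod.mk.inj he).2)⟩

section Gluing

variable {ι : Type*} (J : ℕ → ℕ) (lev : ι → ℕ)

-- `graphRel J n` and `laaksoRel J` are, definitionally, `WormholeRel J (· + 1)` on `Fin n` and `ℕ`.
def WormholeRel (p q : I01 × (ι → Bool)) : Prop :=
  p.1 = q.1 ∧ ∃ l : ι, IsWormhole J (lev l) (p.1 : ℝ) ∧ p.2 l ≠ q.2 l ∧ ∀ i, i ≠ l → p.2 i = q.2 i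

def Glued (p q : I01 × (ι → Bool)) : Prop :=
  p.1 = q.1 ∧ ∀ l, p.2 l ≠ q.2 l → IsWormhole J (lev l) (p.1 : ℝ)

lemma glued_equivalence : Equivalence (Glued J lev) where
  refl _ := ⟨rfl, fun _ h => absurd rfl h⟩
  symm := fun ⟨hx, hw⟩ => ⟨hx.symm, fun l hl => hx ▸ hw l (Ne.symm hl)⟩
  trans := fun {p q _} ⟨hx, hw⟩ ⟨hx', hw'⟩ => ⟨hx.trans hx', fun l hl => by
    by_cases hpq : p.2 l = q.2 l
    · exact hx ▸ hw' l (hpq ▸ hl)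
    · exact hw l hpq⟩

variable {J lev}

-- A point lies on wormholes of one level only, so glued points differ in at most one coordinate.
lemma quot_mk_eq_iff_glued (hlev : Injective lev) {p q : I01 × (ι → Bool)} :
    Quot.mk (WormholeRel J lev) p = Quot.mk (WormholeRel J lev) q ↔ Glued J lev p q := by
  constructor
  · intro h
    refine (glued_equivalence J lev).eqvGen_iff.1 ((Quot.eqvGen_exact h).mono ?_)
    rintro a b ⟨hx, l, hl, -, hrest⟩
    exact ⟨hx, fun i hi => by rwa [of_not_not (mt (hrest i) hi)]⟩
  rintro ⟨hx, hw⟩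
  by_cases hpq : p.2 = q.2
  · rw [Prod.ext hx hpq]
  obtain ⟨l, hl⟩ := ne_iff.1 hpq
  refine Quot.sound ⟨hx, l, hw l hl, hl, fun i hi => ?_⟩
  by_contra hne
  exact hi (hlev ((hw i hne).level_eq (hw l hl)))

lemma isClosed_setOf_glued :
    IsClosed {z : (I01 × (ι → Bool)) × (I01 × (ι → Bool)) | Glued J lev z.1 z.2} := by
  have hW : ∀ l, IsClosed {x : ℝ | IsWormhole J l x} :=
    fun l => (finite_setOf_isWormhole J l).isClosed
  simp only [Glued, ofPred_and, ofPred_forall, imp_iff_not_or, not_not, ofPred_or]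
  exact (isClosed_eq (by fun_prop) (by fun_prop)).inter <| isClosed_iInter fun l =>
    (isClosed_eq (by fun_prop) (by fun_prop)).union
      ((hW (lev l)).preimage (continuous_subtype_val.comp continuous_fst.fst))

theorem t2Space_quot_wormholeRel (hlev : Injective lev) : T2Space (Quot (WormholeRel J lev)) :=
  t2Space_quot_of_isClosed <| by
    simpa only [quot_mk_eq_iff_glued hlev] using isClosed_setOf_glued

end Gluing

lemma FGraph.mk_eq_mk_iff {J : ℕ → ℕ} {n : ℕ} {p q : I01 × (Fin n → Bool)} :
    Quot.mk (graphRel J n) p = Quot.mk (graphRel J n) q ↔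
      Glued J (fun l : Fin n => (l : ℕ) + 1) p q :=
  quot_mk_eq_iff_glued fun _ _ h => Fin.ext (Nat.succ_injective h)

lemma Laakso.mk_eq_mk_iff {J : ℕ → ℕ} {p q : I01 × Kspace} :
    Quot.mk (laaksoRel J) p = Quot.mk (laaksoRel J) q ↔ Glued J (· + 1) p q :=
  quot_mk_eq_iff_glued Nat.succ_injective

instance (J : ℕ → ℕ) : CompactSpace (Laakso J) :=
  Quot.compactSpace

instance (J : ℕ → ℕ) (n : ℕ) : T2Space (FGraph J n) :=
  t2Space_quot_wormholeRel fun _ _ h => Fin.ext (Nat.succ_injective h)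

lemma continuous_truncMap (n : ℕ) : Continuous (truncMap n) :=
  continuous_fst.prodMk (continuous_pi fun i => (continuous_apply (i : ℕ)).comp continuous_snd)

lemma glued_of_glued_projMap {J : ℕ → ℕ} {n : ℕ} {p q : I01 × (Fin (n + 1) → Bool)}
    (h : Glued J (fun l : Fin n => (l : ℕ) + 1) (projMap n p) (projMap n q))
    (hlast : p.2 (Fin.last n) = q.2 (Fin.last n)) :
    Glued J (fun l : Fin (n + 1) => (l : ℕ) + 1) p q :=
  ⟨h.1, Fin.lastCases (fun hl => absurd hlast hl) fun i hi => h.2 i hi⟩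

lemma Laakso.mk_eq_mk_of_forall_truncMap {J : ℕ → ℕ} {p q : I01 × Kspace}
    (h : ∀ n, Quot.mk (graphRel J n) (truncMap n p) = Quot.mk (graphRel J n) (truncMap n q)) :
    Quot.mk (laaksoRel J) p = Quot.mk (laaksoRel J) q :=
  Laakso.mk_eq_mk_iff.2 ⟨(FGraph.mk_eq_mk_iff.1 (h 0)).1,
    fun l hl => (FGraph.mk_eq_mk_iff.1 (h (l + 1))).2 (Fin.last l) hl⟩

lemma exists_forall_mk_truncMap_eq {J : ℕ → ℕ} (φ : ∀ n : ℕ, FGraph J (n + 1) → FGraph J n)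
    (hφ : ∀ (n : ℕ) (p : I01 × (Fin (n + 1) → Bool)),
      φ n (Quot.mk (graphRel J (n + 1)) p) = Quot.mk (graphRel J n) (projMap n p))
    {y : ∀ n : ℕ, FGraph J n} (hy : ∀ n : ℕ, φ n (y (n + 1)) = y n) :
    ∃ p : I01 × Kspace, ∀ n, Quot.mk (graphRel J n) (truncMap n p) = y n := by
  choose p hp using fun n => Quot.exists_rep (y n)
  refine ⟨((p 0).1, fun l => (p (l + 1)).2 (Fin.last l)), fun n => ?_⟩
  induction n with
  | zero => rw [← hp 0]; exact congrArg _ (Prod.ext rfl (Subsingleton.elim _ _))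
  | succ n ih =>
    rw [← hp (n + 1)]
    have hproj := FGraph.mk_eq_mk_iff.1 (by rw [← hφ, hp, hy, ih] :
      Quot.mk (graphRel J n) (projMap n (p (n + 1))) =
        Quot.mk (graphRel J n) (truncMap n ((p 0).1, fun l => (p (l + 1)).2 (Fin.last l))))
    exact FGraph.mk_eq_mk_iff.2 (glued_of_glued_projMap ((glued_equivalence J _).symm hproj) rfl)

theorem stmt5_general (J : ℕ → ℕ)
    (φ : ∀ n : ℕ, FGraph J (n + 1) → FGraph J n)
    (hφ : ∀ (n : ℕ) (p : I01 × (Fin (n + 1) → Bool)),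
      φ n (Quot.mk (graphRel J (n + 1)) p) = Quot.mk (graphRel J n) (projMap n p))
    (Φ : ∀ n : ℕ, Laakso J → FGraph J n)
    (hΦ : ∀ (n : ℕ) (p : I01 × Kspace),
      Φ n (Quot.mk (laaksoRel J) p) = Quot.mk (graphRel J n) (truncMap n p)) :
    (∃ η : Laakso J ≃ₜ {y : ∀ n : ℕ, FGraph J n // ∀ n : ℕ, φ n (y (n + 1)) = y n},
      ∀ (p : Laakso J) (n : ℕ), (η p : ∀ n : ℕ, FGraph J n) n = Φ n p) ∧
    CompactSpace (Laakso J) ∧ T2Space (Laakso J) := by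
  have hcompat (p : Laakso J) (n : ℕ) : φ n (Φ (n + 1) p) = Φ n p := by
    induction p using Quot.ind
    rw [hΦ, hΦ, hφ]
    rfl
  let η : Laakso J → {y : ∀ n : ℕ, FGraph J n // ∀ n : ℕ, φ n (y (n + 1)) = y n} :=
    fun p => ⟨fun n => Φ n p, hcompat p⟩
  have hΦcont (n : ℕ) : Continuous (Φ n) := isQuotientMap_quot_mk.continuous_iff.2 <|
    (continuous_quot_mk.comp (continuous_truncMap n)).congr fun p => (hΦ n p).symm
  have hinj : Injective η := by
    rintro ⟨a⟩ ⟨b⟩ hab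
    refine Laakso.mk_eq_mk_of_forall_truncMap fun n => ?_
    rw [← hΦ, ← hΦ]
    exact congrFun (congrArg Subtype.val hab) n
  have hsurj : Surjective η := by
    rintro ⟨y, hy⟩
    obtain ⟨p, hp⟩ := exists_forall_mk_truncMap_eq φ hφ hy
    exact ⟨Quot.mk _ p, Subtype.ext (funext fun n => (hΦ n p).trans (hp n))⟩
  let e := ((continuous_pi hΦcont).subtype_mk hcompat).homeoOfEquivCompactToT2
    (f := Equiv.ofBijective η ⟨hinj, hsurj⟩)
  exact ⟨⟨e, fun _ _ => rfl⟩, inferInstance, e.symm.t2Space⟩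

/-- the map `η : L → lim← F_n`, `η(p) = (Φ̃_n(p))_{n≥0}`, takes values in
the inverse limit and is a homeomorphism of `L` onto `lim← F_n`; in particular `L` is a
compact Hausdorff space. Here `φ_{n+1,n}` and `Φ̃_n` are characterized by their defining
properties on the quotient maps, and the inverse limit is the subspace of `Π_n F_n` of
compatible sequences. -/
theorem stmt5 (t : ℝ) (j : ℕ) (J : ℕ → ℕ)
    (ht : t ∈ Set.Ioo (0 : ℝ) (1 / 2)) (hj : 2 ≤ j)
    (hjt : 1 / ((j : ℝ) + 1) < t ∧ t ≤ 1 / (j : ℝ))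
    (hJ : ∀ i, J i = j ∨ J i = j + 1)
    (φ : ∀ n : ℕ, FGraph J (n + 1) → FGraph J n)
    (hφ : ∀ (n : ℕ) (p : I01 × (Fin (n + 1) → Bool)),
      φ n (Quot.mk (graphRel J (n + 1)) p) = Quot.mk (graphRel J n) (projMap n p))
    (Φ : ∀ n : ℕ, Laakso J → FGraph J n)
    (hΦ : ∀ (n : ℕ) (p : I01 × Kspace),
      Φ n (Quot.mk (laaksoRel J) p) = Quot.mk (graphRel J n) (truncMap n p)) :
    (∃ η : Laakso J ≃ₜ {y : ∀ n : ℕ, FGraph J n // ∀ n : ℕ, φ n (y (n + 1)) = y n},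
      ∀ (p : Laakso J) (n : ℕ), (η p : ∀ n : ℕ, FGraph J n) n = Φ n p) ∧
    CompactSpace (Laakso J) ∧ T2Space (Laakso J) :=
  stmt5_general J φ hφ Φ hΦ
end

section
/- For every n ≥ 0, the pushforward of μ under Φ̃_n equals μ_n, where μ_n is the pushforward under the quotient map [0,1] × {0,1}^n → F_n of the product of Lebesgue measure λ on [0,1] with the uniform probability measure on {0,1}^n. Moreover, μ is the unique Borel probability measure on L satisfying (Φ̃_n)_* μ = μ_n for all n ≥ 0. -/
open MeasureTheory Set Filter

noncomputable instance (J : ℕ → ℕ) : MeasurableSpace (Laakso J) := borel _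

noncomputable instance (J : ℕ → ℕ) (n : ℕ) : MeasurableSpace (FGraph J n) := borel _

/-- The quotient map `ι : [0,1] × K → L`. -/
def lmk (J : ℕ → ℕ) : I01 × Kspace → Laakso J := Quot.mk (laaksoRel J)

/-- The quotient map `[0,1] × {0,1}^n → F_n`. -/
def gmk (J : ℕ → ℕ) (n : ℕ) : I01 × (Fin n → Bool) → FGraph J n := Quot.mk (graphRel J n)

/-- The uniform probability measure on `{0,1}^n`. -/
noncomputable def unifBool (n : ℕ) : Measure (Fin n → Bool) :=
  ((2 : ENNReal) ^ n)⁻¹ • Measure.count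

/-- The measure `μ_n` on `F_n`: the pushforward under the quotient map of the product of
Lebesgue measure on `[0,1]` with the uniform probability measure on `{0,1}^n`. -/
noncomputable def muN (J : ℕ → ℕ) (n : ℕ) : Measure (FGraph J n) :=
  Measure.map (gmk J n) (lebI.prod (unifBool n))

/-- The measure `μ = ι_*(λ × β)` on the Laakso space. -/
noncomputable def muL (J : ℕ → ℕ) (β : Measure Kspace) : Measure (Laakso J) :=
  Measure.map (lmk J) (lebI.prod β)

section Part1Aux

variable (J : ℕ → ℕ) (n : ℕ)

instance (J : ℕ → ℕ) : BorelSpace (Laakso J) := ⟨rfl⟩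
instance (J : ℕ → ℕ) (n : ℕ) : BorelSpace (FGraph J n) := ⟨rfl⟩

lemma continuous_lmk : Continuous (lmk J) := continuous_quot_mk
lemma continuous_gmk : Continuous (gmk J n) := continuous_quot_mk
lemma measurable_lmk : Measurable (lmk J) := (continuous_lmk J).measurable
lemma measurable_gmk : Measurable (gmk J n) := (continuous_gmk J n).measurable

/-- restriction of a sequence to its first `n` coordinates -/
def headMap (n : ℕ) : Kspace → (Fin n → Bool) := fun w i => w i

lemma measurable_headMap : Measurable (headMap n) :=
  measurable_pi_lambda _ fun i => measurable_pi_apply _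

lemma measurable_truncMap : Measurable (truncMap n : I01 × Kspace → I01 × (Fin n → Bool)) :=
  measurable_fst.prodMk ((measurable_headMap n).comp measurable_snd)

instance : IsProbabilityMeasure lebI := by
  constructor
  rw [lebI, (MeasurableEmbedding.subtype_coe measurableSet_Icc).comap_apply,
    Set.image_univ, Subtype.range_coe, Real.volume_Icc]
  norm_num

lemma map_headMap (β : Measure Kspace) [IsProbabilityMeasure β]
    (hβ : ∀ (s : Finset ℕ) (a : ℕ → Bool),
      β {w : Kspace | ∀ i ∈ s, w i = a i} = (1 / 2 : ENNReal) ^ s.card) :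
    Measure.map (headMap n) β = unifBool n := by
  refine Measure.ext_iff_singleton.mpr fun a => ?_
  rw [Measure.map_apply (measurable_headMap n) (measurableSet_singleton a)]
  have hset : headMap n ⁻¹' {a}
      = {w : Kspace | ∀ i ∈ Finset.range n,
          w i = (fun k => if h : k < n then a ⟨k, h⟩ else false) i} := by
    ext w
    simp only [Set.mem_preimage, Set.mem_singleton_iff, funext_iff, Set.mem_setOf_eq,
      Finset.mem_range, headMap]
    constructor
    · intro h i hi
      rw [dif_pos hi]; exact h ⟨i, hi⟩
    · intro h i
      have := h i.1 i.2
      rwa [dif_pos i.2] at this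
  rw [hset, hβ, Finset.card_range]
  rw [unifBool, Measure.smul_apply, Measure.count_singleton, smul_eq_mul, mul_one,
    one_div, ENNReal.inv_pow]

lemma part1 (β : Measure Kspace) [IsProbabilityMeasure β]
    (hβ : ∀ (s : Finset ℕ) (a : ℕ → Bool),
      β {w : Kspace | ∀ i ∈ s, w i = a i} = (1 / 2 : ENNReal) ^ s.card)
    (Φn : Laakso J → FGraph J n) (hm : Measurable Φn)
    (hΦ : ∀ p : I01 × Kspace, Φn (lmk J p) = gmk J n (truncMap n p)) :
    Measure.map Φn (muL J β) = muN J n := by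
  rw [muL, muN, Measure.map_map hm (measurable_lmk J)]
  have h1 : Φn ∘ lmk J = gmk J n ∘ truncMap n := funext hΦ
  rw [h1, ← Measure.map_map (measurable_gmk J n) (measurable_truncMap n)]
  congr 1
  have h2 : (truncMap n : I01 × Kspace → I01 × (Fin n → Bool)) = Prod.map id (headMap n) := rfl
  rw [h2, ← Measure.map_prod_map _ _ measurable_id (measurable_headMap n), Measure.map_id,
    map_headMap n β hβ]

end Part1Aux

section Arith

variable {J : ℕ → ℕ}

lemma partA (hJ : ∀ h, ((J h : ℝ)) ≠ 0) (c : ℕ → ℕ) (l : ℕ) :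
    (∑ i ∈ Finset.range l, (c i : ℝ) * ∏ h ∈ Finset.range (i + 1), ((J h : ℝ))⁻¹) *
      ∏ h ∈ Finset.range l, (J h : ℝ)
    = ((∑ i ∈ Finset.range l, c i * ∏ h ∈ Finset.Ico (i + 1) l, J h : ℕ) : ℝ) := by
  rw [Finset.sum_mul]
  push_cast
  refine Finset.sum_congr rfl fun i hi => ?_
  rw [Finset.mem_range] at hi
  have hsplit : (∏ h ∈ Finset.range (i + 1), (J h : ℝ)) * ∏ h ∈ Finset.Ico (i + 1) l, (J h : ℝ)
      = ∏ h ∈ Finset.range l, (J h : ℝ) :=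
    Finset.prod_range_mul_prod_Ico _ hi
  have hne : (∏ h ∈ Finset.range (i + 1), (J h : ℝ)) ≠ 0 := Finset.prod_ne_zero_iff.mpr fun h _ => hJ h
  have hone : (∏ h ∈ Finset.range (i + 1), ((J h : ℝ))⁻¹) * ∏ h ∈ Finset.range (i + 1), (J h : ℝ)
      = 1 := by rw [Finset.prod_inv_distrib]; exact inv_mul_cancel₀ hne
  rw [mul_assoc, ← hsplit, ← mul_assoc ((∏ h ∈ Finset.range (i + 1), ((J h : ℝ))⁻¹)),
    hone, one_mul]

lemma partB (hJ : ∀ h, ((J h : ℝ)) ≠ 0) (c : ℕ → ℕ) {l l' : ℕ} (hll : l ≤ l') :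
    (∑ i ∈ Finset.Ico l l', (c i : ℝ) * ∏ h ∈ Finset.range (i + 1), ((J h : ℝ))⁻¹) *
      ∏ h ∈ Finset.range l, (J h : ℝ)
    = ∑ i ∈ Finset.Ico l l', (c i : ℝ) * ∏ h ∈ Finset.Ico l (i + 1), ((J h : ℝ))⁻¹ := by
  rw [Finset.sum_mul]
  refine Finset.sum_congr rfl fun i hi => ?_
  rw [Finset.mem_Ico] at hi
  have h1 : l ≤ i + 1 := hi.1.trans (Nat.le_succ i)
  have hsplit : (∏ h ∈ Finset.range l, ((J h : ℝ))⁻¹) * ∏ h ∈ Finset.Ico l (i + 1), ((J h : ℝ))⁻¹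
      = ∏ h ∈ Finset.range (i + 1), ((J h : ℝ))⁻¹ :=
    Finset.prod_range_mul_prod_Ico _ h1
  have hne : (∏ h ∈ Finset.range l, (J h : ℝ)) ≠ 0 := Finset.prod_ne_zero_iff.mpr fun h _ => hJ h
  have hone : (∏ h ∈ Finset.range l, ((J h : ℝ))⁻¹) * ∏ h ∈ Finset.range l, (J h : ℝ)
      = 1 := by rw [Finset.prod_inv_distrib]; exact inv_mul_cancel₀ hne
  rw [mul_assoc, ← hsplit, mul_right_comm, hone, one_mul]

lemma tail_le (hJ2 : ∀ h, 2 ≤ J h) (c : ℕ → ℕ) {l l' : ℕ} (hll : l ≤ l')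
    (hc : ∀ i, i ∈ Finset.Ico l l' → c i < J i) :
    ∑ i ∈ Finset.Ico l l', (c i : ℝ) * ∏ h ∈ Finset.Ico l (i + 1), ((J h : ℝ))⁻¹
      ≤ 1 - ∏ h ∈ Finset.Ico l l', ((J h : ℝ))⁻¹ := by
  induction l', hll using Nat.le_induction with
  | base => simp
  | succ b hb ih =>
    have hpos : ∀ h : ℕ, (0 : ℝ) < (J h : ℝ) := fun h => by
      exact_mod_cast Nat.lt_of_lt_of_le Nat.zero_lt_two (hJ2 h)
    have hcb : ∀ i, i ∈ Finset.Ico l b → c i < J i := fun i hi => by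
      refine hc i ?_
      rw [Finset.mem_Ico] at hi ⊢
      exact ⟨hi.1, hi.2.trans (Nat.lt_succ_self b)⟩
    have hsum := ih hcb
    rw [Finset.sum_Ico_succ_top hb, Finset.prod_Ico_succ_top hb]
    have hQpos : (0 : ℝ) < ∏ h ∈ Finset.Ico l b, ((J h : ℝ))⁻¹ :=
      Finset.prod_pos fun h _ => inv_pos.mpr (hpos h)
    have hcb' : (c b : ℝ) ≤ (J b : ℝ) - 1 := by
      have : c b < J b := hc b (by rw [Finset.mem_Ico]; exact ⟨hb, Nat.lt_succ_self b⟩)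
      have : (c b : ℝ) + 1 ≤ (J b : ℝ) := by exact_mod_cast this
      linarith
    have key : (c b : ℝ) * ((∏ h ∈ Finset.Ico l b, ((J h : ℝ))⁻¹) * ((J b : ℝ))⁻¹)
        ≤ (∏ h ∈ Finset.Ico l b, ((J h : ℝ))⁻¹) -
          (∏ h ∈ Finset.Ico l b, ((J h : ℝ))⁻¹) * ((J b : ℝ))⁻¹ := by
      have hQJpos : (0 : ℝ) < (∏ h ∈ Finset.Ico l b, ((J h : ℝ))⁻¹) * ((J b : ℝ))⁻¹ :=
        mul_pos hQpos (inv_pos.mpr (hpos b))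
      calc (c b : ℝ) * ((∏ h ∈ Finset.Ico l b, ((J h : ℝ))⁻¹) * ((J b : ℝ))⁻¹)
          ≤ ((J b : ℝ) - 1) * ((∏ h ∈ Finset.Ico l b, ((J h : ℝ))⁻¹) * ((J b : ℝ))⁻¹) := by
            exact mul_le_mul_of_nonneg_right hcb' (le_of_lt hQJpos)
        _ = (∏ h ∈ Finset.Ico l b, ((J h : ℝ))⁻¹) * ((J b : ℝ) * ((J b : ℝ))⁻¹)
              - (∏ h ∈ Finset.Ico l b, ((J h : ℝ))⁻¹) * ((J b : ℝ))⁻¹ := by ring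
        _ = (∏ h ∈ Finset.Ico l b, ((J h : ℝ))⁻¹) -
              (∏ h ∈ Finset.Ico l b, ((J h : ℝ))⁻¹) * ((J b : ℝ))⁻¹ := by
            rw [mul_inv_cancel₀ (ne_of_gt (hpos b)), mul_one]
    linarith

lemma wormhole_level_unique_s6 (hJ2 : ∀ h, 2 ≤ J h) {l l' : ℕ} {x : ℝ} (hll : l < l')
    (h1 : IsWormhole J l x) (h2 : IsWormhole J l' x) : False := by
  obtain ⟨m, hml, hma, hx⟩ := h1
  obtain ⟨m', hm'l, hm'a, hx'⟩ := h2
  have hpos : ∀ h : ℕ, (0 : ℝ) < (J h : ℝ) := fun h => by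
    exact_mod_cast Nat.lt_of_lt_of_le Nat.zero_lt_two (hJ2 h)
  have hJne : ∀ h, ((J h : ℝ)) ≠ 0 := fun h => ne_of_gt (hpos h)
  set c : ℕ → ℕ := fun i => m.getD i 0 with hc
  set c' : ℕ → ℕ := fun i => m'.getD i 0 with hc'
  -- x * P = N
  have hA : x * ∏ h ∈ Finset.range l, (J h : ℝ)
      = ((∑ i ∈ Finset.range l, c i * ∏ h ∈ Finset.Ico (i + 1) l, J h : ℕ) : ℝ) := by
    rw [hx, wLoc, hml]; exact partA hJne c l
  -- x * P = N' + r
  set r : ℝ := ∑ i ∈ Finset.Ico l l', (c' i : ℝ) * ∏ h ∈ Finset.Ico l (i + 1), ((J h : ℝ))⁻¹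
    with hr
  have hB : x * ∏ h ∈ Finset.range l, (J h : ℝ)
      = ((∑ i ∈ Finset.range l, c' i * ∏ h ∈ Finset.Ico (i + 1) l, J h : ℕ) : ℝ) + r := by
    rw [hx', wLoc, hm'l]
    rw [← Finset.sum_range_add_sum_Ico _ (le_of_lt hll), add_mul,
      partA hJne c' l, partB hJne c' (le_of_lt hll)]
  -- bounds on r
  have hbnd : ∀ i, i ∈ Finset.Ico l l' → c' i < J i := fun i hi => by
    rw [Finset.mem_Ico] at hi
    exact hm'a.2.1 i (by rw [hm'l]; exact hi.2)
  have hrlt : r < 1 := by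
    have h1 := tail_le hJ2 c' (le_of_lt hll) hbnd
    have h2 : (0 : ℝ) < ∏ h ∈ Finset.Ico l l', ((J h : ℝ))⁻¹ :=
      Finset.prod_pos fun h _ => inv_pos.mpr (hpos h)
    linarith
  have hrpos : 0 < r := by
    have hmem : l' - 1 ∈ Finset.Ico l l' := by
      rw [Finset.mem_Ico]
      omega
    have hterm : (0 : ℝ) < (c' (l' - 1) : ℝ) * ∏ h ∈ Finset.Ico l (l' - 1 + 1), ((J h : ℝ))⁻¹ := by
      apply mul_pos
      · have : 0 < c' (l' - 1) := by
          have := hm'a.2.2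
          rwa [hm'l] at this
        exact_mod_cast this
      · exact Finset.prod_pos fun h _ => inv_pos.mpr (hpos h)
    have hnn : ∀ i ∈ Finset.Ico l l',
        (0 : ℝ) ≤ (c' i : ℝ) * ∏ h ∈ Finset.Ico l (i + 1), ((J h : ℝ))⁻¹ := fun i _ => by
      apply mul_nonneg (Nat.cast_nonneg _)
      exact le_of_lt (Finset.prod_pos fun h _ => inv_pos.mpr (hpos h))
    exact lt_of_lt_of_le hterm (Finset.single_le_sum hnn hmem)
  -- contradiction
  set N : ℕ := ∑ i ∈ Finset.range l, c i * ∏ h ∈ Finset.Ico (i + 1) l, J h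
  set N' : ℕ := ∑ i ∈ Finset.range l, c' i * ∏ h ∈ Finset.Ico (i + 1) l, J h
  have heq : (N : ℝ) = (N' : ℝ) + r := by rw [← hA, hB]
  have hlt : N' < N := by
    have : (N' : ℝ) < (N : ℝ) := by linarith
    exact_mod_cast this
  have : (N' : ℝ) + 1 ≤ (N : ℝ) := by exact_mod_cast hlt
  linarith

end Arith

section QuotAux

variable {J : ℕ → ℕ} {n : ℕ}

/-- forward characterization of equality in `F_n` -/
lemma gmk_eq_implies {p q : I01 × (Fin n → Bool)} (h : gmk J n p = gmk J n q) :
    p.1 = q.1 ∧ ∀ l : Fin n, p.2 l ≠ q.2 l → IsWormhole J (l.1 + 1) (p.1 : ℝ) := by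
  have h' : Relation.EqvGen (graphRel J n) p q := Quot.eqvGen_exact h
  clear h
  induction h' with
  | rel p q hpq =>
    obtain ⟨he, l0, hw, hd, ho⟩ := hpq
    refine ⟨he, fun l hl => ?_⟩
    by_cases hll : l = l0
    · rwa [hll]
    · exact absurd (ho l hll) hl
  | refl p => exact ⟨rfl, fun l hl => absurd rfl hl⟩
  | symm p q _ ih =>
    refine ⟨ih.1.symm, fun l hl => ?_⟩
    have := ih.2 l (Ne.symm hl)
    rwa [ih.1] at this
  | trans p q r _ _ ih1 ih2 =>
    refine ⟨ih1.1.trans ih2.1, fun l hl => ?_⟩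
    by_cases hpq : p.2 l = q.2 l
    · have : q.2 l ≠ r.2 l := by rw [← hpq]; exact hl
      have := ih2.2 l this
      rwa [← ih1.1] at this
    · exact ih1.2 l hpq

/-- multi-flip: changing several wormhole coordinates does not change the class -/
lemma gmk_eq_of (J : ℕ → ℕ) (n : ℕ) (x : I01) :
    ∀ (k : ℕ) (a a' : Fin n → Bool),
      (Finset.univ.filter fun l => a l ≠ a' l).card ≤ k →
      (∀ l : Fin n, a l ≠ a' l → IsWormhole J (l.1 + 1) (x : ℝ)) →
      gmk J n (x, a) = gmk J n (x, a') := by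
  intro k
  induction k with
  | zero =>
    intro a a' hcard _
    have hempty : (Finset.univ.filter fun l => a l ≠ a' l) = ∅ :=
      Finset.card_eq_zero.mp (Nat.le_zero.mp hcard)
    have : a = a' := by
      funext l
      by_contra hne
      have : l ∈ (Finset.univ.filter fun l => a l ≠ a' l) := by
        simp [hne]
      rw [hempty] at this
      exact absurd this (Finset.notMem_empty l)
    rw [this]
  | succ k ih =>
    intro a a' hcard hworm
    by_cases heq : a = a'
    · rw [heq]
    · have : ∃ l0 : Fin n, a l0 ≠ a' l0 := by
        by_contra hno
        push_neg at hno
        exact heq (funext hno)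
      obtain ⟨l0, hl0⟩ := this
      set a'' : Fin n → Bool := Function.update a l0 (a' l0) with ha''
      have step1 : gmk J n (x, a) = gmk J n (x, a'') := by
        apply Quot.sound
        refine ⟨rfl, l0, hworm l0 hl0, ?_, ?_⟩
        · rw [ha'']
          simp only [Function.update_self]
          exact hl0
        · intro i hi
          show a i = a'' i
          rw [ha'', Function.update_of_ne hi]
      have hsub : (Finset.univ.filter fun l => a'' l ≠ a' l)
          ⊆ (Finset.univ.filter fun l => a l ≠ a' l).erase l0 := by
        intro l hl
        simp only [Finset.mem_filter, Finset.mem_univ, true_and] at hl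
        have hne : l ≠ l0 := by
          intro hll
          apply hl
          rw [hll, ha'', Function.update_self]
        rw [Finset.mem_erase]
        refine ⟨hne, ?_⟩
        simp only [Finset.mem_filter, Finset.mem_univ, true_and]
        rwa [ha'', Function.update_of_ne hne] at hl
      have hmem : l0 ∈ (Finset.univ.filter fun l => a l ≠ a' l) := by simp [hl0]
      have hcard'' : (Finset.univ.filter fun l => a'' l ≠ a' l).card ≤ k := by
        calc (Finset.univ.filter fun l => a'' l ≠ a' l).card
            ≤ ((Finset.univ.filter fun l => a l ≠ a' l).erase l0).card :=
              Finset.card_le_card hsub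
          _ = (Finset.univ.filter fun l => a l ≠ a' l).card - 1 :=
              Finset.card_erase_of_mem hmem
          _ ≤ k := by omega
      have step2 : gmk J n (x, a'') = gmk J n (x, a') := by
        apply ih a'' a' hcard''
        intro l hl
        have hne : l ≠ l0 := by
          intro hll
          apply hl
          rw [hll, ha'', Function.update_self]
        rw [ha'', Function.update_of_ne hne] at hl
        exact hworm l hl
      rw [step1, step2]

/-- the projection `F_m → F_n` for `n ≤ m` -/
def psi (J : ℕ → ℕ) {n m : ℕ} (hnm : n ≤ m) : FGraph J m → FGraph J n :=
  Quot.lift (fun p => gmk J n (p.1, fun i => p.2 (Fin.castLE hnm i))) (by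
    intro p q hpq
    obtain ⟨he, l0, hw, hd, ho⟩ := hpq
    have key : ∀ i : Fin n, p.2 (Fin.castLE hnm i) ≠ q.2 (Fin.castLE hnm i) →
        IsWormhole J (i.1 + 1) (p.1 : ℝ) := by
      intro i hi
      have hil : Fin.castLE hnm i = l0 := by
        by_contra hne
        exact hi (ho _ hne)
      have hval : (i : ℕ) = (l0 : ℕ) := by rw [← hil]; rfl
      rw [hval]
      exact hw
    have h1 : gmk J n (p.1, fun i => p.2 (Fin.castLE hnm i))
        = gmk J n (p.1, fun i => q.2 (Fin.castLE hnm i)) :=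
      gmk_eq_of J n p.1 _ _ _ le_rfl key
    rw [h1, he])

lemma continuous_psi (J : ℕ → ℕ) {n m : ℕ} (hnm : n ≤ m) : Continuous (psi J hnm) := by
  apply continuous_quot_lift
  exact (continuous_gmk J n).comp (continuous_fst.prodMk
    (continuous_pi fun i => (continuous_apply _).comp continuous_snd))

lemma psi_gmk_trunc (J : ℕ → ℕ) {n m : ℕ} (hnm : n ≤ m) (p : I01 × Kspace) :
    psi J hnm (gmk J m (truncMap m p)) = gmk J n (truncMap n p) := rfl

end QuotAux

section TopAux

variable {J : ℕ → ℕ}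

lemma wormholeSet_finite (J : ℕ → ℕ) (B : ℕ) (hB : ∀ i, J i ≤ B) (l : ℕ) :
    {y : ℝ | IsWormhole J l y}.Finite := by
  have hsub : {y : ℝ | IsWormhole J l y}
      ⊆ Set.range (fun v : Fin l → Fin (B + 1) => wLoc J (List.ofFn fun i => (v i : ℕ))) := by
    rintro y ⟨m, hml, hma, rfl⟩
    subst hml
    have hofn : List.ofFn (fun i : Fin m.length => m.getD i.1 0) = m := by
      have : (fun i : Fin m.length => m.getD i.1 0) = fun i : Fin m.length => m[(i : ℕ)] := by
        funext i
        exact List.getD_eq_getElem m 0 i.2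
      rw [this, List.ofFn_getElem]
    refine ⟨fun i => ⟨m.getD i.1 0, ?_⟩, ?_⟩
    · have h1 := hma.2.1 i.1 i.2
      have h2 := hB i.1
      omega
    · show wLoc J (List.ofFn (fun i : Fin m.length => m.getD i.1 0)) = wLoc J m
      rw [hofn]
  exact (Set.finite_range _).subset hsub

lemma wormholeSet_nonempty (hJ2 : ∀ h, 2 ≤ J h) (l : ℕ) :
    {y : ℝ | IsWormhole J (l + 1) y}.Nonempty := by
  set m : List ℕ := List.ofFn (fun i : Fin (l + 1) => if i.1 = l then 1 else 0) with hm
  have hlen : m.length = l + 1 := by rw [hm, List.length_ofFn]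
  have hget : ∀ i (hi : i < l + 1), m.getD i 0 = if i = l then 1 else 0 := by
    intro i hi
    rw [hm, List.getD_eq_getElem _ _ (by rwa [List.length_ofFn]), List.getElem_ofFn]
  refine ⟨wLoc J m, m, hlen, ⟨?_, ?_, ?_⟩, rfl⟩
  · intro hnil; rw [hnil] at hlen; simp at hlen
  · intro i hi
    rw [hlen] at hi
    rw [hget i hi]
    have := hJ2 i
    split <;> omega
  · rw [hlen]
    simp only [Nat.add_sub_cancel]
    rw [hget l (Nat.lt_succ_self l)]
    simp

/-- A function separating the classes of `F_n`. -/
noncomputable def sepFun (J : ℕ → ℕ) (n : ℕ) : I01 × (Fin n → Bool) → ℝ × (Fin n → ℝ) :=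
  fun p => ((p.1 : ℝ), fun l =>
    (if p.2 l then (1 : ℝ) else 0) * Metric.infDist (p.1 : ℝ) {y | IsWormhole J (l.1 + 1) y})

lemma sepFun_respects {n : ℕ} {p q : I01 × (Fin n → Bool)} (h : graphRel J n p q) :
    sepFun J n p = sepFun J n q := by
  obtain ⟨he, l0, hw, hd, ho⟩ := h
  have hx : (p.1 : ℝ) = (q.1 : ℝ) := by rw [he]
  refine Prod.ext hx (funext fun l => ?_)
  by_cases hl : l = l0
  · subst hl
    have hzero : Metric.infDist (p.1 : ℝ) {y | IsWormhole J (l.1 + 1) y} = 0 :=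
      Metric.infDist_zero_of_mem hw
    rw [hx] at hzero
    simp [sepFun, hzero, hx]
  · simp [sepFun, ho l hl, hx]

/-- The induced separating function on `F_n`. -/
noncomputable def sepFunBar (J : ℕ → ℕ) (n : ℕ) : FGraph J n → ℝ × (Fin n → ℝ) :=
  Quot.lift (sepFun J n) fun _ _ h => sepFun_respects h

lemma continuous_sepFunBar (J : ℕ → ℕ) (n : ℕ) : Continuous (sepFunBar J n) := by
  apply continuous_quot_lift
  apply Continuous.prodMk
  · exact continuous_subtype_val.comp continuous_fst
  · refine continuous_pi fun l => Continuous.mul ?_ ?_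
    · exact (continuous_of_discreteTopology
        (f := fun b : Bool => if b then (1 : ℝ) else 0)).comp
        ((continuous_apply l).comp continuous_snd)
    · exact Metric.continuous_infDist_pt _ |>.comp
        (continuous_subtype_val.comp continuous_fst)

lemma t2_FGraph (J : ℕ → ℕ) (B : ℕ) (hJ2 : ∀ h, 2 ≤ J h) (hB : ∀ i, J i ≤ B) (n : ℕ) :
    T2Space (FGraph J n) := by
  refine T2Space.of_injective_continuous (f := sepFunBar J n) ?_ (continuous_sepFunBar J n)
  intro z z'
  induction z using Quot.ind with | _ p =>
  induction z' using Quot.ind with | _ q =>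
  intro h
  have h1 : (p.1 : ℝ) = (q.1 : ℝ) := congrArg Prod.fst h
  have hx : p.1 = q.1 := Subtype.ext h1
  have h2 := congrArg Prod.snd h
  have hworm : ∀ l : Fin n, p.2 l ≠ q.2 l → IsWormhole J (l.1 + 1) (p.1 : ℝ) := by
    intro l hl
    have hcoord := congrFun h2 l
    simp only [sepFunBar, sepFun] at hcoord
    rw [h1]
    have hd : Metric.infDist (q.1 : ℝ) {y | IsWormhole J (l.1 + 1) y} = 0 := by
      rw [h1] at hcoord
      rcases Bool.eq_false_or_eq_true (p.2 l) with hb | hb <;>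
        rcases Bool.eq_false_or_eq_true (q.2 l) with hb' | hb'
      · exact absurd (hb.trans hb'.symm) hl
      · simp [hb, hb'] at hcoord
        linarith
      · simp [hb, hb'] at hcoord
        linarith
      · exact absurd (hb.trans hb'.symm) hl
    have hcl : IsClosed {y : ℝ | IsWormhole J (l.1 + 1) y} :=
      (wormholeSet_finite J B hB (l.1 + 1)).isClosed
    have hne : {y : ℝ | IsWormhole J (l.1 + 1) y}.Nonempty := wormholeSet_nonempty hJ2 l.1
    exact (hcl.mem_iff_infDist_zero hne).mpr hd
  have hcard : (Finset.univ.filter fun l : Fin n => p.2 l ≠ q.2 l).card ≤ n := by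
    calc (Finset.univ.filter fun l : Fin n => p.2 l ≠ q.2 l).card
        ≤ Finset.univ.card := Finset.card_filter_le _ _
      _ = n := Finset.card_fin n
  have key : gmk J n (p.1, p.2) = gmk J n (p.1, q.2) := gmk_eq_of J n p.1 n p.2 q.2 hcard hworm
  have key2 : gmk J n (p.1, q.2) = gmk J n (q.1, q.2) := by rw [hx]
  exact key.trans key2

lemma compactSpace_laakso (J : ℕ → ℕ) : CompactSpace (Laakso J) := by
  constructor
  have : (Set.univ : Set (Laakso J)) = lmk J '' Set.univ := by
    rw [Set.image_univ]
    exact (Set.range_eq_univ.mpr fun z => Quot.exists_rep z).symm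
  rw [this]
  exact isCompact_univ.image (continuous_lmk J)

lemma phi_family_injective (hJ2 : ∀ h, 2 ≤ J h) (Φ : ∀ n : ℕ, Laakso J → FGraph J n)
    (hΦ : ∀ (n : ℕ) (p : I01 × Kspace), Φ n (lmk J p) = gmk J n (truncMap n p))
    {z z' : Laakso J} (h : ∀ n, Φ n z = Φ n z') : z = z' := by
  obtain ⟨p, rfl⟩ := Quot.exists_rep z
  obtain ⟨p', rfl⟩ := Quot.exists_rep z'
  have hn : ∀ n, gmk J n (truncMap n p) = gmk J n (truncMap n p') := by
    intro n
    rw [← hΦ n p, ← hΦ n p']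
    exact h n
  have hchar := fun n => gmk_eq_implies (hn n)
  have hx : p.1 = p'.1 := (hchar 0).1
  have hworm : ∀ l : ℕ, p.2 l ≠ p'.2 l → IsWormhole J (l + 1) (p.1 : ℝ) := by
    intro l hl
    exact (hchar (l + 1)).2 ⟨l, Nat.lt_succ_self l⟩ hl
  by_cases hpw : p.2 = p'.2
  · have : p = p' := Prod.ext hx hpw
    rw [this]
  · obtain ⟨l0, hl0⟩ := Function.ne_iff.mp hpw
    have huniq : ∀ i, i ≠ l0 → p.2 i = p'.2 i := by
      intro i hi
      by_contra hne
      rcases Nat.lt_or_ge i l0 with hlt | hge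
      · exact wormhole_level_unique_s6 hJ2 (by omega : i + 1 < l0 + 1) (hworm i hne) (hworm l0 hl0)
      · have hgt : l0 < i := lt_of_le_of_ne hge (Ne.symm hi)
        exact wormhole_level_unique_s6 hJ2 (by omega : l0 + 1 < i + 1) (hworm l0 hl0) (hworm i hne)
    exact Quot.sound ⟨hx, l0, hworm l0 hl0, hl0, huniq⟩

end TopAux

section MeasAux

variable {J : ℕ → ℕ}

lemma phi_psi (J : ℕ → ℕ) {n m : ℕ} (hnm : n ≤ m)
    (Φ : ∀ k : ℕ, Laakso J → FGraph J k)
    (hΦ : ∀ (k : ℕ) (p : I01 × Kspace), Φ k (lmk J p) = gmk J k (truncMap k p))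
    (z : Laakso J) : Φ n z = psi J hnm (Φ m z) := by
  obtain ⟨p, rfl⟩ := Quot.exists_rep z
  rw [show Quot.mk _ p = lmk J p from rfl, hΦ n p, hΦ m p, psi_gmk_trunc]

lemma closed_eq_iInter (J : ℕ → ℕ) (B : ℕ) (hJ2 : ∀ h, 2 ≤ J h) (hB : ∀ i, J i ≤ B)
    (Φ : ∀ k : ℕ, Laakso J → FGraph J k) (hΦc : ∀ k, Continuous (Φ k))
    (hΦ : ∀ (k : ℕ) (p : I01 × Kspace), Φ k (lmk J p) = gmk J k (truncMap k p))
    {K : Set (Laakso J)} (hK : IsClosed K) :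
    K = ⋂ n, Φ n ⁻¹' (Φ n '' K) := by
  apply Set.Subset.antisymm
  · exact Set.subset_iInter fun n => Set.subset_preimage_image (Φ n) K
  · intro z hz
    simp only [Set.mem_iInter, Set.mem_preimage] at hz
    have hex : ∀ n, ∃ y, y ∈ K ∧ Φ n y = Φ n z := by
      intro n
      obtain ⟨y, hyK, hy⟩ := hz n
      exact ⟨y, hyK, hy⟩
    choose k hkK hkeq using hex
    haveI := compactSpace_laakso J
    have hKc : IsCompact K := hK.isCompact
    have hle : Filter.map k Filter.atTop ≤ Filter.principal K := by
      rw [Filter.le_principal_iff]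
      exact Filter.mem_map.mpr (Filter.univ_mem' hkK)
    obtain ⟨c, hcK, hc⟩ := hKc.exists_clusterPt hle
    have hcz : ∀ m, Φ m c = Φ m z := by
      intro m
      haveI : T2Space (FGraph J m) := t2_FGraph J B hJ2 hB m
      set S : Set (Laakso J) := Φ m ⁻¹' {Φ m z} with hS
      have hScl : IsClosed S := isClosed_singleton.preimage (hΦc m)
      have hSmem : S ∈ Filter.map k Filter.atTop := by
        rw [Filter.mem_map]
        filter_upwards [Filter.eventually_ge_atTop m] with n hn
        show k n ∈ S
        rw [hS, Set.mem_preimage, Set.mem_singleton_iff,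
          phi_psi J hn Φ hΦ (k n), hkeq n, ← phi_psi J hn Φ hΦ z]
      have : ClusterPt c (Filter.principal S) := hc.mono (Filter.le_principal_iff.mpr hSmem)
      have hcS : c ∈ S := by
        have := mem_closure_iff_clusterPt.mpr this
        rwa [hScl.closure_eq] at this
      exact hcS
    have : c = z := phi_family_injective hJ2 Φ hΦ hcz
    rw [← this]
    exact hcK

end MeasAux

/-- with `μ = ι_*(λ × β)`, for every `n ≥ 0` the pushforward of `μ` under
`Φ̃_n` equals `μ_n`, and `μ` is the unique Borel probability measure on `L` with this
property. -/
theorem stmt6 (t : ℝ) (j : ℕ) (J : ℕ → ℕ)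
    (ht : t ∈ Set.Ioo (0 : ℝ) (1 / 2)) (hj : 2 ≤ j)
    (hjt : 1 / ((j : ℝ) + 1) < t ∧ t ≤ 1 / (j : ℝ))
    (hJ : ∀ i, J i = j ∨ J i = j + 1)
    (β : Measure Kspace) [IsProbabilityMeasure β]
    (hβ : ∀ (s : Finset ℕ) (a : ℕ → Bool),
      β {w : Kspace | ∀ i ∈ s, w i = a i} = (1 / 2 : ENNReal) ^ s.card)
    (Φ : ∀ n : ℕ, Laakso J → FGraph J n)
    (hΦc : ∀ n : ℕ, Continuous (Φ n))
    (hΦ : ∀ (n : ℕ) (p : I01 × Kspace), Φ n (lmk J p) = gmk J n (truncMap n p)) :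
    (∀ n : ℕ, Measure.map (Φ n) (muL J β) = muN J n) ∧
    (∀ ν : Measure (Laakso J), IsProbabilityMeasure ν →
      (∀ n : ℕ, Measure.map (Φ n) ν = muN J n) → ν = muL J β) := by
  have hJ2 : ∀ h, 2 ≤ J h := fun h => by rcases hJ h with h' | h' <;> omega
  have hB : ∀ i, J i ≤ j + 1 := fun i => by rcases hJ i with h' | h' <;> omega
  have hpart1 : ∀ n : ℕ, Measure.map (Φ n) (muL J β) = muN J n := fun n =>
    part1 J n β hβ (Φ n) (hΦc n).measurable (hΦ n)
  refine ⟨hpart1, ?_⟩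
  intro ν hν hmap
  haveI : IsProbabilityMeasure (muL J β) :=
    Measure.isProbabilityMeasure_map (measurable_lmk J).aemeasurable
  set P : Set (Set (Laakso J)) :=
    {S | ∃ (n : ℕ) (s : Set (FGraph J n)), MeasurableSet s ∧ S = Φ n ⁻¹' s} with hP
  have hPi : IsPiSystem P := by
    rintro S ⟨n, s, hs, rfl⟩ S' ⟨m, s', hs', rfl⟩ -
    rcases le_total n m with hnm | hmn
    · refine ⟨m, (psi J hnm ⁻¹' s) ∩ s', ((continuous_psi J hnm).measurable hs).inter hs', ?_⟩
      rw [Set.preimage_inter]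
      congr 1
      ext z
      simp only [Set.mem_preimage, phi_psi J hnm Φ hΦ z]
    · refine ⟨n, s ∩ (psi J hmn ⁻¹' s'), hs.inter ((continuous_psi J hmn).measurable hs'), ?_⟩
      rw [Set.preimage_inter]
      congr 1
      ext z
      simp only [Set.mem_preimage, phi_psi J hmn Φ hΦ z]
  have hPsub : ∀ S ∈ P, MeasurableSet S := by
    rintro S ⟨n, s, hs, rfl⟩
    exact (hΦc n).measurable hs
  have hgen : (inferInstance : MeasurableSpace (Laakso J)) = MeasurableSpace.generateFrom P := by
    apply le_antisymm
    · -- borel ≤ generateFrom P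
      have hclosed : ∀ K : Set (Laakso J), IsClosed K →
          MeasurableSet[MeasurableSpace.generateFrom P] K := by
        intro K hK
        rw [closed_eq_iInter J (j + 1) hJ2 hB Φ hΦc hΦ hK]
        refine MeasurableSet.iInter fun n => ?_
        apply MeasurableSpace.measurableSet_generateFrom
        refine ⟨n, Φ n '' K, ?_, rfl⟩
        haveI := compactSpace_laakso J
        haveI : T2Space (FGraph J n) := t2_FGraph J (j + 1) hJ2 hB n
        exact ((hK.isCompact.image (hΦc n)).isClosed).measurableSet
      show (borel (Laakso J) : MeasurableSpace (Laakso J)) ≤ MeasurableSpace.generateFrom P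
      rw [borel]
      apply MeasurableSpace.generateFrom_le
      intro U hU
      rw [← compl_compl U]
      exact (hclosed Uᶜ (isClosed_compl_iff.mpr hU)).compl
    · exact MeasurableSpace.generateFrom_le hPsub
  refine ext_of_generate_finite P hgen hPi ?_ ?_
  · rintro S ⟨n, s, hs, rfl⟩
    rw [← Measure.map_apply (hΦc n).measurable hs, ← Measure.map_apply (hΦc n).measurable hs,
      hmap n, hpart1 n]
  · simp [measure_univ]
end

section
/- The space 𝒢 is dense in the space C(L) of continuous real-valued functions on the Laakso space L with respect to the supremum norm. -/
open MeasureTheory Set Filter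

/-- The finite set `{0,1} ∪ {wormhole locations of level at most n}`. -/
def wormholeSet (J : ℕ → ℕ) (n : ℕ) : Set ℝ :=
  {0, 1} ∪ {x : ℝ | ∃ l : ℕ, 1 ≤ l ∧ l ≤ n ∧ IsWormhole J l x}

/-- The pullback `f ∘ ι` of `f : L → ℝ`, with fixed Cantor coordinate `w`, viewed as a
function of a real variable (via the retraction of `ℝ` onto `[0,1]`; only its values on
subintervals of `[0,1]` are ever used). -/
noncomputable def pull (J : ℕ → ℕ) (f : Laakso J → ℝ) (w : Kspace) (x : ℝ) : ℝ :=
  f (Quot.mk (laaksoRel J) (Set.projIcc (0 : ℝ) 1 zero_le_one x, w))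

/-- Membership in `𝒢_n`: `f : L → ℝ` is continuous, its pullback `f∘ι` is constant in the
Cantor direction on each cell `{w : (w_1, …, w_n) = a}` of depth `n` for each fixed
`x ∈ [0,1]`, and for each fixed `w ∈ K` it is continuously differentiable (with one-sided
derivatives at the endpoints) on each closed subinterval of `[0,1]` whose endpoints are
consecutive points of the finite set `{0,1} ∪ {wormhole locations of level ≤ n}`. -/
def InG (J : ℕ → ℕ) (n : ℕ) (f : Laakso J → ℝ) : Prop :=
  Continuous f ∧
  (∀ (x : I01) (w w' : Kspace), (∀ i, i < n → w i = w' i) →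
    f (Quot.mk (laaksoRel J) (x, w)) = f (Quot.mk (laaksoRel J) (x, w'))) ∧
  (∀ (w : Kspace) (a b : ℝ), a ∈ wormholeSet J n → b ∈ wormholeSet J n → a < b →
    (∀ s ∈ wormholeSet J n, ¬(a < s ∧ s < b)) →
    ContDiffOn ℝ 1 (pull J f w) (Set.Icc a b))

namespace Stmt8Aux

variable {J : ℕ → ℕ}

/-- The integer `wLoc J m * ∏_{h<n} J h`. -/
def natS (J : ℕ → ℕ) (m : List ℕ) (n : ℕ) : ℕ :=
  ∑ i ∈ Finset.range m.length, m.getD i 0 * ∏ h ∈ Finset.Ico (i + 1) n, J h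

lemma wLoc_mul (hJ : ∀ h, 0 < J h) {m : List ℕ} {n : ℕ} (hn : m.length ≤ n) :
    wLoc J m * ∏ h ∈ Finset.range n, (J h : ℝ) = (natS J m n : ℝ) := by
  unfold wLoc natS
  push_cast
  rw [Finset.sum_mul]
  refine Finset.sum_congr rfl fun i hi => ?_
  rw [Finset.mem_range] at hi
  have h1 : i + 1 ≤ n := le_trans hi hn
  rw [← Finset.prod_range_mul_prod_Ico (fun h => (J h : ℝ)) h1]
  have h2 : (∏ h ∈ Finset.range (i + 1), ((J h : ℝ))⁻¹) *
      ∏ h ∈ Finset.range (i + 1), (J h : ℝ) = 1 := by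
    rw [← Finset.prod_mul_distrib]
    refine Finset.prod_eq_one fun h _ => ?_
    have : (J h : ℝ) ≠ 0 := by exact_mod_cast (hJ h).ne'
    field_simp
  calc (m.getD i 0 : ℝ) * (∏ h ∈ Finset.range (i + 1), ((J h : ℝ))⁻¹) *
        ((∏ h ∈ Finset.range (i + 1), (J h : ℝ)) * ∏ h ∈ Finset.Ico (i + 1) n, (J h : ℝ))
      = (m.getD i 0 : ℝ) * (((∏ h ∈ Finset.range (i + 1), ((J h : ℝ))⁻¹) *
          ∏ h ∈ Finset.range (i + 1), (J h : ℝ)) * ∏ h ∈ Finset.Ico (i + 1) n, (J h : ℝ)) := by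
        ring
    _ = _ := by rw [h2, one_mul]

lemma dvd_natS {m : List ℕ} {n : ℕ} (hn : m.length < n) : J (n - 1) ∣ natS J m n := by
  refine Finset.dvd_sum fun i hi => ?_
  rw [Finset.mem_range] at hi
  exact Dvd.dvd.mul_left
    (Finset.dvd_prod_of_mem _ (Finset.mem_Ico.2 ⟨by omega, by omega⟩)) _

lemma natS_mod {m : List ℕ} {n : ℕ} (hlen : m.length = n) (hn : 1 ≤ n)
    (hlast : m.getD (n - 1) 0 < J (n - 1)) :
    natS J m n % J (n - 1) = m.getD (n - 1) 0 := by
  obtain ⟨k, rfl⟩ : ∃ k, n = k + 1 := ⟨n - 1, by omega⟩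
  simp only [Nat.add_sub_cancel] at hlast ⊢
  unfold natS
  rw [hlen, Finset.sum_range_succ, Finset.Ico_self, Finset.prod_empty, mul_one]
  have hdvd : J k ∣ ∑ i ∈ Finset.range k, m.getD i 0 * ∏ h ∈ Finset.Ico (i + 1) (k + 1), J h := by
    refine Finset.dvd_sum fun i hi => ?_
    rw [Finset.mem_range] at hi
    exact Dvd.dvd.mul_left
      (Finset.dvd_prod_of_mem _ (Finset.mem_Ico.2 ⟨by omega, by omega⟩)) _
  obtain ⟨c, hc⟩ := hdvd
  rw [hc, mul_comm, Nat.mul_add_mod', Nat.mod_eq_of_lt hlast]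


lemma wormhole_level_lt_aux (hJ : ∀ h, 0 < J h) {l l' : ℕ} {x : ℝ}
    (hll : l < l') (h1 : IsWormhole J l x) (h2 : IsWormhole J l' x) : False := by
  obtain ⟨m, hm, ⟨-, hdig, -⟩, hx⟩ := h1
  obtain ⟨m', hm', ⟨hne', hdig', hpos'⟩, hx'⟩ := h2
  have hl' : 1 ≤ l' := by
    rw [← hm']
    exact List.length_pos_iff.2 hne'
  have heq : natS J m l' = natS J m' l' := by
    have e1 := wLoc_mul hJ (n := l') (m := m) (by omega)
    have e2 := wLoc_mul hJ (n := l') (m := m') (le_of_eq hm')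
    rw [← hx] at e1
    rw [← hx'] at e2
    exact_mod_cast e1.symm.trans e2
  have hdvd : J (l' - 1) ∣ natS J m l' := dvd_natS (by omega)
  have hmod : natS J m' l' % J (l' - 1) = m'.getD (l' - 1) 0 := by
    refine natS_mod hm' hl' ?_
    have := hdig' (l' - 1) (by omega)
    exact this
  rw [heq] at hdvd
  have hz : natS J m' l' % J (l' - 1) = 0 := Nat.mod_eq_zero_of_dvd hdvd
  have hposlast : 0 < m'.getD (l' - 1) 0 := by rwa [hm'] at hpos'
  omega

lemma wormhole_level_unique (hJ : ∀ h, 0 < J h) {l l' : ℕ} {x : ℝ}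
    (h1 : IsWormhole J l x) (h2 : IsWormhole J l' x) : l = l' := by
  rcases lt_trichotomy l l' with h | h | h
  · exact absurd (wormhole_level_lt_aux hJ h h1 h2) not_false
  · exact h
  · exact absurd (wormhole_level_lt_aux hJ h h2 h1) not_false


lemma wLoc_nonneg (hJ : ∀ h, 0 < J h) (m : List ℕ) : 0 ≤ wLoc J m := by
  unfold wLoc
  refine Finset.sum_nonneg fun i _ => mul_nonneg (by positivity) ?_
  exact Finset.prod_nonneg fun h _ => by positivity

lemma geom_identity (hJ : ∀ h, 0 < J h) (L : ℕ) :
    ∑ i ∈ Finset.range L, ((J i : ℝ) - 1) * ∏ h ∈ Finset.range (i + 1), ((J h : ℝ))⁻¹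
      = 1 - ∏ h ∈ Finset.range L, ((J h : ℝ))⁻¹ := by
  induction L with
  | zero => simp
  | succ k ih =>
    rw [Finset.sum_range_succ, ih, Finset.prod_range_succ]
    have hne : (J k : ℝ) ≠ 0 := by exact_mod_cast (hJ k).ne'
    have hQ : (∏ x ∈ Finset.range k, (J x : ℝ)) ≠ 0 :=
      Finset.prod_ne_zero_iff.2 fun h _ => by exact_mod_cast (hJ h).ne'
    field_simp
    ring

lemma wLoc_le_one (hJ : ∀ h, 0 < J h) {m : List ℕ} (hm : Admissible J m) : wLoc J m ≤ 1 := by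
  obtain ⟨-, hdig, -⟩ := hm
  have h1 : wLoc J m ≤ ∑ i ∈ Finset.range m.length,
      ((J i : ℝ) - 1) * ∏ h ∈ Finset.range (i + 1), ((J h : ℝ))⁻¹ := by
    unfold wLoc
    refine Finset.sum_le_sum fun i hi => ?_
    rw [Finset.mem_range] at hi
    refine mul_le_mul_of_nonneg_right ?_
      (Finset.prod_nonneg fun h _ => by positivity)
    have := hdig i hi
    have : (m.getD i 0 : ℝ) + 1 ≤ (J i : ℝ) := by exact_mod_cast this
    linarith
  rw [geom_identity hJ] at h1
  have h2 : 0 ≤ ∏ h ∈ Finset.range m.length, ((J h : ℝ))⁻¹ :=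
    Finset.prod_nonneg fun h _ => by positivity
  linarith

lemma wormholeSet_subset_Icc (hJ : ∀ h, 0 < J h) (n : ℕ) :
    wormholeSet J n ⊆ Set.Icc (0 : ℝ) 1 := by
  rintro x (hx | hx)
  · rcases hx with rfl | hx
    · exact ⟨le_refl 0, zero_le_one⟩
    · rw [Set.mem_singleton_iff] at hx
      subst hx
      exact ⟨zero_le_one, le_refl 1⟩
  · obtain ⟨l, -, -, m, -, hadm, rfl⟩ := hx
    exact ⟨wLoc_nonneg hJ m, wLoc_le_one hJ hadm⟩

lemma wormholeSet_finite (hJ : ∀ h, 0 < J h) (n : ℕ) : (wormholeSet J n).Finite := by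
  set P : ℕ := ∏ h ∈ Finset.range n, J h with hP
  have hPpos : 0 < P := Finset.prod_pos fun h _ => hJ h
  have hPR : (0 : ℝ) < (P : ℝ) := by exact_mod_cast hPpos
  have hsub : wormholeSet J n ⊆ (fun k : ℕ => (k : ℝ) / (P : ℝ)) '' (Set.Iic P) := by
    rintro x (hx | hx)
    · rcases hx with rfl | hx
      · exact ⟨0, by simp, by simp⟩
      · rw [Set.mem_singleton_iff] at hx
        subst hx
        exact ⟨P, Set.mem_Iic.2 le_rfl, by field_simp⟩
    · obtain ⟨l, hl1, hln, m, hml, hadm, rfl⟩ := hx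
      have hlen : m.length ≤ n := by omega
      have hmul := wLoc_mul hJ hlen
      have hle1 : wLoc J m ≤ 1 := wLoc_le_one hJ hadm
      have hcast : (∏ h ∈ Finset.range n, (J h : ℝ)) = (P : ℝ) := by
        rw [hP]; push_cast; rfl
      rw [hcast] at hmul
      refine ⟨natS J m n, Set.mem_Iic.2 ?_, ?_⟩
      · have : (natS J m n : ℝ) ≤ (P : ℝ) := by
          rw [← hmul]
          nlinarith [wLoc_nonneg hJ m]
        exact_mod_cast this
      · show (natS J m n : ℝ) / (P : ℝ) = wLoc J m
        rw [div_eq_iff hPR.ne', ← hmul]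
  exact Set.Finite.subset ((Set.finite_Iic P).image _) hsub

lemma wormholeSet_mono {n m : ℕ} (h : n ≤ m) : wormholeSet J n ⊆ wormholeSet J m := by
  rintro x (hx | hx)
  · exact Or.inl hx
  · obtain ⟨l, h1, h2, h3⟩ := hx
    exact Or.inr ⟨l, h1, le_trans h2 h, h3⟩


lemma zero_mem_wormholeSet (n : ℕ) : (0 : ℝ) ∈ wormholeSet J n := Or.inl (Or.inl rfl)

lemma one_mem_wormholeSet (n : ℕ) : (1 : ℝ) ∈ wormholeSet J n := Or.inl (Or.inr rfl)

lemma InG_mono (hJ : ∀ h, 0 < J h) {n m : ℕ} {f : Laakso J → ℝ}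
    (hnm : n ≤ m) (hf : InG J n f) : InG J m f := by
  obtain ⟨hc, hconst, hdiff⟩ := hf
  refine ⟨hc, fun x w w' h => hconst x w w' fun i hi => h i (lt_of_lt_of_le hi hnm), ?_⟩
  intro w a b ha hb hab hgap
  have ha01 := wormholeSet_subset_Icc hJ m ha
  have hb01 := wormholeSet_subset_Icc hJ m hb
  have hfin := wormholeSet_finite hJ n
  set T : Finset ℝ := hfin.toFinset with hT
  have hmemT : ∀ s : ℝ, s ∈ T ↔ s ∈ wormholeSet J n := fun s => hfin.mem_toFinset
  set Ta : Finset ℝ := T.filter (· ≤ a) with hTa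
  have hTane : Ta.Nonempty :=
    ⟨0, Finset.mem_filter.2 ⟨(hmemT 0).2 (zero_mem_wormholeSet n), ha01.1⟩⟩
  set Tb : Finset ℝ := T.filter (b ≤ ·) with hTb
  have hTbne : Tb.Nonempty :=
    ⟨1, Finset.mem_filter.2 ⟨(hmemT 1).2 (one_mem_wormholeSet n), hb01.2⟩⟩
  set a' := Ta.max' hTane with ha'
  set b' := Tb.min' hTbne with hb'
  have ha'mem : a' ∈ wormholeSet J n :=
    (hmemT a').1 (Finset.mem_filter.1 (Ta.max'_mem hTane)).1
  have hb'mem : b' ∈ wormholeSet J n :=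
    (hmemT b').1 (Finset.mem_filter.1 (Tb.min'_mem hTbne)).1
  have ha'le : a' ≤ a := (Finset.mem_filter.1 (Ta.max'_mem hTane)).2
  have hb'ge : b ≤ b' := (Finset.mem_filter.1 (Tb.min'_mem hTbne)).2
  have ha'b' : a' < b' := lt_of_le_of_lt ha'le (lt_of_lt_of_le hab hb'ge)
  have hgap' : ∀ s ∈ wormholeSet J n, ¬(a' < s ∧ s < b') := by
    rintro s hs ⟨hs1, hs2⟩
    rcases le_or_gt s a with h | h
    · exact absurd hs1 (not_lt.2 (Ta.le_max' s (Finset.mem_filter.2 ⟨(hmemT s).2 hs, h⟩)))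
    · rcases le_or_gt b s with h2 | h2
      · exact absurd hs2 (not_lt.2 (Tb.min'_le s (Finset.mem_filter.2 ⟨(hmemT s).2 hs, h2⟩)))
      · exact hgap s (wormholeSet_mono hnm hs) ⟨h, h2⟩
  exact (hdiff w a' b' ha'mem hb'mem ha'b' hgap').mono (Set.Icc_subset_Icc ha'le hb'ge)

lemma InG_add (hJ : ∀ h, 0 < J h) {n : ℕ} {f g : Laakso J → ℝ}
    (hf : InG J n f) (hg : InG J n g) : InG J n (fun p => f p + g p) := by
  obtain ⟨hcf, hconstf, hdf⟩ := hf
  obtain ⟨hcg, hconstg, hdg⟩ := hg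
  refine ⟨hcf.add hcg, fun x w w' h => by simp only; rw [hconstf x w w' h, hconstg x w w' h], ?_⟩
  intro w a b ha hb hab hgap
  have : pull J (fun p => f p + g p) w = fun x => pull J f w x + pull J g w x := rfl
  rw [this]
  exact (hdf w a b ha hb hab hgap).add (hdg w a b ha hb hab hgap)

lemma InG_mul (hJ : ∀ h, 0 < J h) {n : ℕ} {f g : Laakso J → ℝ}
    (hf : InG J n f) (hg : InG J n g) : InG J n (fun p => f p * g p) := by
  obtain ⟨hcf, hconstf, hdf⟩ := hf
  obtain ⟨hcg, hconstg, hdg⟩ := hg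
  refine ⟨hcf.mul hcg, fun x w w' h => by simp only; rw [hconstf x w w' h, hconstg x w w' h], ?_⟩
  intro w a b ha hb hab hgap
  have : pull J (fun p => f p * g p) w = fun x => pull J f w x * pull J g w x := rfl
  rw [this]
  exact (hdf w a b ha hb hab hgap).mul (hdg w a b ha hb hab hgap)

lemma InG_const (c : ℝ) : InG J 0 (fun _ : Laakso J => c) := by
  refine ⟨continuous_const, fun _ _ _ _ => rfl, ?_⟩
  intro w a b _ _ _ _
  exact contDiffOn_const


/-- The coordinate function on the Laakso space. -/
def coordF (J : ℕ → ℕ) : Laakso J → ℝ :=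
  Quot.lift (fun p => (p.1 : ℝ)) fun p q h => by
    show ((p.1 : I01) : ℝ) = ((q.1 : I01) : ℝ)
    rw [h.1]

lemma coordF_mk (p : I01 × Kspace) : coordF J (Quot.mk (laaksoRel J) p) = (p.1 : ℝ) := rfl

lemma projIcc_coe {a b x : ℝ} (hab : a ∈ Set.Icc (0:ℝ) 1) (hbb : b ∈ Set.Icc (0:ℝ) 1)
    (hx : x ∈ Set.Icc a b) : ((Set.projIcc (0:ℝ) 1 zero_le_one x : I01) : ℝ) = x := by
  have : x ∈ Set.Icc (0:ℝ) 1 := ⟨le_trans hab.1 hx.1, le_trans hx.2 hbb.2⟩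
  rw [Set.projIcc_of_mem zero_le_one this]

lemma InG_coordF (hJ : ∀ h, 0 < J h) : InG J 0 (coordF J) := by
  refine ⟨continuous_quot_lift _ (continuous_subtype_val.comp continuous_fst),
    fun _ _ _ _ => rfl, ?_⟩
  intro w a b ha hb hab hgap
  have ha01 := wormholeSet_subset_Icc hJ 0 ha
  have hb01 := wormholeSet_subset_Icc hJ 0 hb
  refine (contDiffOn_id (𝕜 := ℝ) (E := ℝ) (s := Set.Icc a b) (n := 1)).congr ?_
  intro x hx
  exact projIcc_coe ha01 hb01 hx

lemma isWormhole_finite (hJ : ∀ h, 0 < J h) (l : ℕ) :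
    {x : ℝ | IsWormhole J (l + 1) x}.Finite :=
  (wormholeSet_finite hJ (l + 1)).subset fun x hx => Or.inr ⟨l + 1, by omega, le_rfl, hx⟩

/-- The bump-times-indicator function used to separate points in the Cantor
direction at coordinate `l`. -/
noncomputable def flipF (J : ℕ → ℕ) (hJ : ∀ h, 0 < J h) (l : ℕ) : Laakso J → ℝ :=
  Quot.lift
    (fun p => (∏ s ∈ (isWormhole_finite hJ l).toFinset, ((p.1 : ℝ) - s) ^ 2) *
      (if p.2 l then 1 else 0))
    (by
      rintro p q ⟨h1, l', hw, hd, hag⟩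
      show (∏ s ∈ (isWormhole_finite hJ l).toFinset, ((p.1 : ℝ) - s) ^ 2) *
          (if p.2 l then 1 else 0) =
        (∏ s ∈ (isWormhole_finite hJ l).toFinset, ((q.1 : ℝ) - s) ^ 2) *
          (if q.2 l then 1 else 0)
      by_cases hll : l' = l
      · subst hll
        have hmem : ((p.1 : I01) : ℝ) ∈ (isWormhole_finite hJ l').toFinset :=
          (isWormhole_finite hJ l').mem_toFinset.2 hw
        rw [Finset.prod_eq_zero hmem (by ring), zero_mul,
          Finset.prod_eq_zero hmem (by rw [← h1]; ring), zero_mul]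
      · rw [h1, hag l (fun h => hll h.symm)])

lemma flipF_mk (hJ : ∀ h, 0 < J h) (l : ℕ) (p : I01 × Kspace) :
    flipF J hJ l (Quot.mk (laaksoRel J) p) =
      (∏ s ∈ (isWormhole_finite hJ l).toFinset, ((p.1 : ℝ) - s) ^ 2) *
        (if p.2 l then 1 else 0) := rfl

lemma contDiff_bump (hJ : ∀ h, 0 < J h) (l : ℕ) :
    ContDiff ℝ 1 (fun y : ℝ => ∏ s ∈ (isWormhole_finite hJ l).toFinset, (y - s) ^ 2) :=
  contDiff_prod fun s _ => (contDiff_id.sub contDiff_const).pow 2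

lemma InG_flipF (hJ : ∀ h, 0 < J h) (l : ℕ) : InG J (l + 1) (flipF J hJ l) := by
  classical
  refine ⟨?_, ?_, ?_⟩
  · refine continuous_quot_lift _ ?_
    refine Continuous.mul ?_ ?_
    · exact ((contDiff_bump hJ l).continuous).comp (continuous_subtype_val.comp continuous_fst)
    · exact Continuous.comp (g := fun b : Bool => if b then (1:ℝ) else 0)
        continuous_of_discreteTopology ((continuous_apply l).comp continuous_snd)
  · intro x w w' h
    rw [flipF_mk, flipF_mk]
    simp only [h l (by omega)]
  · intro w a b ha hb hab hgap
    have ha01 := wormholeSet_subset_Icc hJ (l + 1) ha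
    have hb01 := wormholeSet_subset_Icc hJ (l + 1) hb
    have : ContDiff ℝ 1 (fun y : ℝ =>
        (∏ s ∈ (isWormhole_finite hJ l).toFinset, (y - s) ^ 2) * (if w l then 1 else 0)) :=
      (contDiff_bump hJ l).mul contDiff_const
    refine this.contDiffOn.congr ?_
    intro x hx
    show flipF J hJ l (Quot.mk (laaksoRel J) (Set.projIcc (0:ℝ) 1 zero_le_one x, w)) = _
    rw [flipF_mk]
    simp only
    rw [projIcc_coe ha01 hb01 hx]


/-- The subalgebra `𝒢` of `C(L)`. -/
noncomputable def GAlg (J : ℕ → ℕ) (hJ : ∀ h, 0 < J h) : Subalgebra ℝ C(Laakso J, ℝ) where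
  carrier := {f | ∃ n, InG J n ⇑f}
  mul_mem' := by
    rintro f g ⟨n, hf⟩ ⟨m, hg⟩
    exact ⟨max n m, by
      rw [ContinuousMap.coe_mul]
      exact InG_mul hJ (InG_mono hJ (le_max_left n m) hf) (InG_mono hJ (le_max_right n m) hg)⟩
  add_mem' := by
    rintro f g ⟨n, hf⟩ ⟨m, hg⟩
    exact ⟨max n m, by
      rw [ContinuousMap.coe_add]
      exact InG_add hJ (InG_mono hJ (le_max_left n m) hf) (InG_mono hJ (le_max_right n m) hg)⟩
  one_mem' := ⟨0, InG_const 1⟩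
  zero_mem' := ⟨0, InG_const 0⟩
  algebraMap_mem' := fun r => ⟨0, InG_const r⟩

instance : CompactSpace (Laakso J) :=
  inferInstanceAs (CompactSpace (Quot (laaksoRel J)))

lemma GAlg_sep (hJ : ∀ h, 0 < J h) : (GAlg J hJ).SeparatesPoints := by
  intro x y hxy
  obtain ⟨p, rfl⟩ := Quot.exists_rep x
  obtain ⟨q, rfl⟩ := Quot.exists_rep y
  by_cases hx : p.1 = q.1
  · have hwne : ∃ l, p.2 l ≠ q.2 l ∧ ¬IsWormhole J (l + 1) ((p.1 : I01) : ℝ) := by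
      by_contra hcon
      push_neg at hcon
      obtain ⟨l1, hl1⟩ : ∃ l, p.2 l ≠ q.2 l := by
        by_contra hall
        push_neg at hall
        exact hxy (by rw [Prod.ext hx (funext hall)])
      have hagree : ∀ i, i ≠ l1 → p.2 i = q.2 i := by
        intro i hi
        by_contra hne
        have h1 := hcon i hne
        have h2 := hcon l1 hl1
        exact hi (by have := wormhole_level_unique hJ h1 h2; omega)
      exact hxy (Quot.sound ⟨hx, l1, hcon l1 hl1, hl1, hagree⟩)
    obtain ⟨l, hdl, hnw⟩ := hwne
    refine ⟨flipF J hJ l, ⟨⟨flipF J hJ l, (InG_flipF hJ l).1⟩, ⟨l + 1, InG_flipF hJ l⟩, rfl⟩, ?_⟩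
    rw [flipF_mk, flipF_mk, ← hx]
    have hb : (∏ s ∈ (isWormhole_finite hJ l).toFinset, (((p.1 : I01) : ℝ) - s) ^ 2) ≠ 0 := by
      refine Finset.prod_ne_zero_iff.2 fun s hs h0 => ?_
      have hz : ((p.1 : I01) : ℝ) = s := by
        have := pow_eq_zero_iff (n := 2) (by norm_num) |>.1 h0
        linarith [sub_eq_zero.1 this]
      rw [hz] at hnw
      exact hnw ((isWormhole_finite hJ l).mem_toFinset.1 hs)
    intro hEq
    have := mul_left_cancel₀ hb hEq
    revert hdl this
    cases p.2 l <;> cases q.2 l <;> simp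
  · refine ⟨coordF J, ⟨⟨coordF J, (InG_coordF hJ).1⟩, ⟨0, InG_coordF hJ⟩, rfl⟩, ?_⟩
    rw [coordF_mk, coordF_mk]
    exact fun h => hx (Subtype.ext h)

end Stmt8Aux
/-- `𝒢 = ⋃_n 𝒢_n` is dense in `C(L)` in the supremum norm: every continuous
function on `L` is uniformly approximated by functions of `𝒢`. -/
theorem stmt8 (t : ℝ) (j : ℕ) (J : ℕ → ℕ)
    (ht : t ∈ Set.Ioo (0 : ℝ) (1 / 2)) (hj : 2 ≤ j)
    (hjt : 1 / ((j : ℝ) + 1) < t ∧ t ≤ 1 / (j : ℝ))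
    (hJ : ∀ i, J i = j ∨ J i = j + 1) :
    ∀ g : Laakso J → ℝ, Continuous g → ∀ ε : ℝ, 0 < ε →
      ∃ (n : ℕ) (f : Laakso J → ℝ), InG J n f ∧ ∀ p : Laakso J, |f p - g p| < ε := by
  intro g hg ε hε
  have hJpos : ∀ h, 0 < J h := fun h => by rcases hJ h with h' | h' <;> omega
  obtain ⟨f, hf⟩ := ContinuousMap.exists_mem_subalgebra_near_continuous_of_separatesPoints
    (Stmt8Aux.GAlg J hJpos) (Stmt8Aux.GAlg_sep hJpos) g hg ε hε
  obtain ⟨n, hn⟩ := f.2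
  exact ⟨n, ⇑(f : C(Laakso J, ℝ)), hn, fun p => by
    have := hf p
    rwa [Real.norm_eq_abs] at this⟩
end

section
/- Let a < b be real numbers, α > 0, and f : [a,b] → ℝ continuous. Then there exists a unique function g : [a,b] → ℝ that is twice continuously differentiable on [a,b] (one-sided derivatives at the endpoints) and satisfies α·g(x) − g″(x) = f(x) for all x ∈ [a,b] together with the Neumann boundary conditions g′(a) = 0 and g′(b) = 0. -/
/-!
Existence: extend `f` continuously to `ℝ`, solve `u'' = α u - f` by variation of constants with
`u'(a) = 0`, and add the multiple of `cosh (√α (x - a))` that makes the derivative vanish at `b`.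

Uniqueness: the difference `w` of two solutions satisfies `w'' = α w` with `w'(a) = w'(b) = 0`.
The energy `w w'` has derivative `w'^2 + α w^2 ≥ 0` and vanishes at both ends, so it is identically
zero; hence so is its derivative, which forces `w = 0`.
-/

open Set Real

def IsNeumannSolution (α : ℝ) (f : ℝ → ℝ) (a b : ℝ) (g : ℝ → ℝ) : Prop :=
  ContDiffOn ℝ 2 g (Icc a b) ∧
    (∀ x ∈ Icc a b, α * g x - derivWithin (derivWithin g (Icc a b)) (Icc a b) x = f x) ∧
    derivWithin g (Icc a b) a = 0 ∧ derivWithin g (Icc a b) b = 0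

theorem exists_hasDerivAt_sq_mul_sub {ω : ℝ} (hω : ω ≠ 0) {F : ℝ → ℝ} (hF : Continuous F)
    (a : ℝ) :
    ∃ u u' : ℝ → ℝ, (∀ x, HasDerivAt u (u' x) x) ∧
      (∀ x, HasDerivAt u' (ω ^ 2 * u x - F x) x) ∧ u' a = 0 := by
  set C : ℝ → ℝ := fun x => ∫ t in a..x, cosh (ω * t) * F t
  set S : ℝ → ℝ := fun x => ∫ t in a..x, sinh (ω * t) * F t
  have hC (x : ℝ) : HasDerivAt C (cosh (ω * x) * F x) x :=
    (by fun_prop : Continuous fun t => cosh (ω * t) * F t).integral_hasStrictDerivAt a x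
      |>.hasDerivAt
  have hS (x : ℝ) : HasDerivAt S (sinh (ω * x) * F x) x :=
    (by fun_prop : Continuous fun t => sinh (ω * t) * F t).integral_hasStrictDerivAt a x
      |>.hasDerivAt
  have hcosh (x : ℝ) : HasDerivAt (fun y => cosh (ω * y)) (sinh (ω * x) * ω) x :=
    ((hasDerivAt_id' x).const_mul ω).cosh.congr_deriv (by ring)
  have hsinh (x : ℝ) : HasDerivAt (fun y => sinh (ω * y)) (cosh (ω * x) * ω) x :=
    ((hasDerivAt_id' x).const_mul ω).sinh.congr_deriv (by ring)
  -- `u x = ω⁻¹ ∫ t in a..x, sinh (ω (t - x)) F t`, with the kernel expanded by the addition formula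
  refine ⟨fun x => ω⁻¹ * (cosh (ω * x) * S x - sinh (ω * x) * C x),
    fun x => sinh (ω * x) * S x - cosh (ω * x) * C x, fun x => ?_, fun x => ?_, by simp [C, S]⟩
  · refine ((((hcosh x).mul (hS x)).sub ((hsinh x).mul (hC x))).const_mul ω⁻¹).congr_deriv ?_
    field_simp
    ring
  · refine (((hsinh x).mul (hS x)).sub ((hcosh x).mul (hC x))).congr_deriv ?_
    field_simp
    linear_combination (-F x) * cosh_sq_sub_sinh_sq (ω * x)

theorem exists_hasDerivAt_neumann {a b α : ℝ} (hab : a < b) (hα : 0 < α) {F : ℝ → ℝ}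
    (hF : Continuous F) :
    ∃ g g' : ℝ → ℝ, (∀ x, HasDerivAt g (g' x) x) ∧
      (∀ x, HasDerivAt g' (α * g x - F x) x) ∧ g' a = 0 ∧ g' b = 0 := by
  obtain ⟨ω, hω, rfl⟩ : ∃ ω, 0 < ω ∧ ω ^ 2 = α := ⟨√α, sqrt_pos.2 hα, sq_sqrt hα.le⟩
  obtain ⟨u, u', hu, hu', hu'a⟩ := exists_hasDerivAt_sq_mul_sub hω.ne' hF a
  have hv (x : ℝ) : HasDerivAt (fun y => cosh (ω * (y - a))) (ω * sinh (ω * (x - a))) x :=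
    (((hasDerivAt_id' x).sub_const a).const_mul ω).cosh.congr_deriv (by ring)
  have hv' (x : ℝ) :
      HasDerivAt (fun y => ω * sinh (ω * (y - a))) (ω ^ 2 * cosh (ω * (x - a))) x :=
    ((((hasDerivAt_id' x).sub_const a).const_mul ω).sinh.const_mul ω).congr_deriv (by ring)
  have hv'b : ω * sinh (ω * (b - a)) ≠ 0 :=
    mul_ne_zero hω.ne' (sinh_pos_iff.2 (mul_pos hω (sub_pos.2 hab))).ne'
  set c := u' b / (ω * sinh (ω * (b - a)))
  refine ⟨fun x => u x - c * cosh (ω * (x - a)), fun x => u' x - c * (ω * sinh (ω * (x - a))),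
    fun x => (hu x).sub ((hv x).const_mul c),
    fun x => ((hu' x).sub ((hv' x).const_mul c)).congr_deriv (by ring), by simp [hu'a], ?_⟩
  exact sub_eq_zero.2 (div_mul_cancel₀ _ hv'b).symm

theorem contDiff_two_of_hasDerivAt {g g' g'' : ℝ → ℝ} (hg : ∀ x, HasDerivAt g (g' x) x)
    (hg' : ∀ x, HasDerivAt g' (g'' x) x) (hg'' : Continuous g'') : ContDiff ℝ 2 g := by
  have hderiv : deriv g = g' := funext fun x => (hg x).deriv
  have hderiv' : deriv g' = g'' := funext fun x => (hg' x).deriv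
  rw [show (2 : WithTop ℕ∞) = 1 + 1 from rfl, contDiff_succ_iff_deriv, hderiv]
  refine ⟨fun x => (hg x).differentiableAt, by simp, ?_⟩
  exact contDiff_one_iff_deriv.2 ⟨fun x => (hg' x).differentiableAt, hderiv' ▸ hg''⟩

theorem isNeumannSolution_of_hasDerivAt {a b α : ℝ} (hab : a < b) {f F g g' : ℝ → ℝ}
    (hF : Continuous F) (hFf : EqOn F f (Icc a b)) (hg : ∀ x, HasDerivAt g (g' x) x)
    (hg' : ∀ x, HasDerivAt g' (α * g x - F x) x) (ha : g' a = 0) (hb : g' b = 0) :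
    IsNeumannSolution α f a b g := by
  have hU := uniqueDiffOn_Icc hab
  have hdg : EqOn (derivWithin g (Icc a b)) g' (Icc a b) := fun x hx =>
    (hg x).hasDerivWithinAt.derivWithin (hU x hx)
  have hgc : Continuous g := continuous_iff_continuousAt.2 fun x => (hg x).continuousAt
  refine ⟨(contDiff_two_of_hasDerivAt hg hg' ((continuous_const.mul hgc).sub hF)).contDiffOn,
    fun x hx => ?_, by rw [hdg ⟨le_rfl, hab.le⟩, ha], by rw [hdg ⟨hab.le, le_rfl⟩, hb]⟩
  rw [derivWithin_congr hdg (hdg hx), (hg' x).hasDerivWithinAt.derivWithin (hU x hx), hFf hx]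
  ring

theorem exists_isNeumannSolution {a b α : ℝ} (hab : a < b) (hα : 0 < α) {f : ℝ → ℝ}
    (hf : ContinuousOn f (Icc a b)) : ∃ g, IsNeumannSolution α f a b g := by
  set F : ℝ → ℝ := fun x => f (projIcc a b hab.le x)
  have hF : Continuous F :=
    hf.comp_continuous (continuous_subtype_val.comp continuous_projIcc) fun x => Subtype.mem _
  have hFf : EqOn F f (Icc a b) := fun x hx => by simp [F, projIcc_of_mem hab.le hx]
  obtain ⟨g, g', hg, hg', ha, hb⟩ := exists_hasDerivAt_neumann hab hα hF
  exact ⟨g, isNeumannSolution_of_hasDerivAt hab hF hFf hg hg' ha hb⟩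

theorem eqOn_zero_of_hasDerivWithinAt_neumann {a b α : ℝ} (hab : a < b) (hα : 0 < α)
    {w w' : ℝ → ℝ} (hw : ∀ x ∈ Icc a b, HasDerivWithinAt w (w' x) (Icc a b) x)
    (hw' : ∀ x ∈ Icc a b, HasDerivWithinAt w' (α * w x) (Icc a b) x) (ha : w' a = 0)
    (hb : w' b = 0) : EqOn w 0 (Icc a b) := by
  have henergy : ∀ x ∈ Icc a b,
      HasDerivWithinAt (fun y => w y * w' y) (w' x ^ 2 + α * w x ^ 2) (Icc a b) x :=
    fun x hx => ((hw x hx).mul (hw' x hx)).congr_deriv (by ring)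
  have hmono : MonotoneOn (fun y => w y * w' y) (Icc a b) :=
    monotoneOn_of_hasDerivWithinAt_nonneg (convex_Icc a b)
      (fun x hx => (henergy x hx).continuousWithinAt)
      (fun x hx => (henergy x (interior_subset hx)).mono interior_subset)
      (fun x _ => by positivity)
  have hzero : ∀ x ∈ Icc a b, w x * w' x = 0 := fun x hx =>
    le_antisymm (by simpa [hb] using hmono hx (right_mem_Icc.2 hab.le) hx.2)
      (by simpa [ha] using hmono (left_mem_Icc.2 hab.le) hx hx.1)
  intro x hx
  have hsq : w' x ^ 2 + α * w x ^ 2 = 0 :=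
    (uniqueDiffOn_Icc hab x hx).eq_deriv _ (henergy x hx)
      ((hasDerivWithinAt_const x _ 0).congr hzero (hzero x hx))
  have : w x ^ 2 = 0 := by nlinarith [sq_nonneg (w' x), sq_nonneg (w x)]
  exact pow_eq_zero_iff two_ne_zero |>.1 this

namespace IsNeumannSolution

variable {a b α : ℝ} {f g : ℝ → ℝ}

theorem hasDerivWithinAt (h : IsNeumannSolution α f a b g) {x : ℝ}
    (hx : x ∈ Icc a b) : HasDerivWithinAt g (derivWithin g (Icc a b) x) (Icc a b) x :=
  (h.1.differentiableOn (by norm_num) x hx).hasDerivWithinAt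

theorem hasDerivWithinAt_derivWithin (hab : a < b) (h : IsNeumannSolution α f a b g) {x : ℝ}
    (hx : x ∈ Icc a b) :
    HasDerivWithinAt (derivWithin g (Icc a b)) (α * g x - f x) (Icc a b) x := by
  have hd := (h.1.derivWithin (uniqueDiffOn_Icc hab) (m := 1) (by norm_num)).differentiableOn
    one_ne_zero x hx
  refine hd.hasDerivWithinAt.congr_deriv ?_
  linarith [h.2.1 x hx]

theorem eqOn (hab : a < b) (hα : 0 < α) {g₂ : ℝ → ℝ} (h₁ : IsNeumannSolution α f a b g)
    (h₂ : IsNeumannSolution α f a b g₂) : EqOn g g₂ (Icc a b) := by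
  have hzero := eqOn_zero_of_hasDerivWithinAt_neumann hab hα
    (fun x hx => (h₁.hasDerivWithinAt hx).sub (h₂.hasDerivWithinAt hx))
    (fun x hx => ((h₁.hasDerivWithinAt_derivWithin hab hx).sub
      (h₂.hasDerivWithinAt_derivWithin hab hx)).congr_deriv (by simp only [Pi.sub_apply]; ring))
    (by simp [h₁.2.2.1, h₂.2.2.1]) (by simp [h₁.2.2.2, h₂.2.2.2])
  exact fun x hx => sub_eq_zero.1 (hzero hx)

end IsNeumannSolution

/-- for `a < b`, `α > 0` and `f` continuous on `[a,b]`, there is a unique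
`g` twice continuously differentiable on `[a,b]` (one-sided derivatives at the endpoints,
i.e. derivatives within `[a,b]`) with `α·g − g″ = f` on `[a,b]` and Neumann boundary
conditions `g′(a) = 0`, `g′(b) = 0`. (Functions on `[a,b]` are modelled as functions on
`ℝ`; uniqueness is uniqueness of the values on `[a,b]`.) -/
theorem stmt14 (a b α : ℝ) (hab : a < b) (hα : 0 < α) (f : ℝ → ℝ)
    (hf : ContinuousOn f (Set.Icc a b)) :
    ∃ g : ℝ → ℝ,
      (ContDiffOn ℝ 2 g (Set.Icc a b) ∧
        (∀ x ∈ Set.Icc a b,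
          α * g x - derivWithin (derivWithin g (Set.Icc a b)) (Set.Icc a b) x = f x) ∧
        derivWithin g (Set.Icc a b) a = 0 ∧ derivWithin g (Set.Icc a b) b = 0) ∧
      ∀ g₂ : ℝ → ℝ,
        (ContDiffOn ℝ 2 g₂ (Set.Icc a b) ∧
          (∀ x ∈ Set.Icc a b,
            α * g₂ x - derivWithin (derivWithin g₂ (Set.Icc a b)) (Set.Icc a b) x = f x) ∧
          derivWithin g₂ (Set.Icc a b) a = 0 ∧ derivWithin g₂ (Set.Icc a b) b = 0) →
        ∀ x ∈ Set.Icc a b, g₂ x = g x := by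
  obtain ⟨g, hg⟩ := exists_isNeumannSolution hab hα hf
  exact ⟨g, hg, fun g₂ hg₂ => IsNeumannSolution.eqOn hab hα hg₂ hg⟩
end
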